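/- arXiv:2505.08563 — 7 statements merged into one kernel-verified Lean document; each statement's English description precedes it below -/
import Mathlib

section
/- Let x̄₀ ∈ ℝ, η > 0 and c > 0. Let u¹, u² ∈ L¹(ℝ) be nonnegative functions with u^i(x) ≥ c for almost every x ∈ [x̄₀ − η, x̄₀ + η] (i = 1, 2), and let x̄₁, x̄₂ ∈ [x̄₀ − η, x̄₀ + η] satisfy ∫_{x̄_i}^∞ u^i(y) dy = 1 for i = 1, 2. Then c · |x̄₁ − x̄₂| ≤ ‖u² − u¹‖_{L¹(ℝ)}. -/
open MeasureTheory Set Filter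

/- If `x₁ ≤ x₂`, the equal tails give `∫_{x₁}^{x₂} u₁ = ∫_{x₂}^∞ u₂ - ∫_{x₂}^∞ u₁`.
The left side is at least `c (x₂ - x₁)` because `u₁ ≥ c` between the thresholds, and the
right side is at most `‖u₂ - u₁‖_{L¹}`. -/

theorem setIntegral_sub_le_integral_abs_sub {α : Type*} [MeasurableSpace α] {μ : Measure α}
    {f g : α → ℝ} (hf : Integrable f μ) (hg : Integrable g μ) (s : Set α) :
    (∫ x in s, f x ∂μ) - ∫ x in s, g x ∂μ ≤ ∫ x, |f x - g x| ∂μ :=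
  calc (∫ x in s, f x ∂μ) - ∫ x in s, g x ∂μ = ∫ x in s, (f x - g x) ∂μ :=
        (integral_sub hf.integrableOn hg.integrableOn).symm
    _ ≤ ∫ x in s, |f x - g x| ∂μ :=
        integral_mono (hf.sub hg).integrableOn (hf.sub hg).abs.integrableOn fun _ => le_abs_self _
    _ ≤ ∫ x, |f x - g x| ∂μ :=
        setIntegral_le_integral (hf.sub hg).abs (ae_of_all _ fun _ => abs_nonneg _)

theorem mul_sub_le_intervalIntegral_of_ae_le {u : ℝ → ℝ} {a b c : ℝ} (hab : a ≤ b)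
    (hu : IntegrableOn u (Ioc a b)) (hc : ∀ᵐ x, x ∈ Ioc a b → c ≤ u x) :
    c * (b - a) ≤ ∫ x in a..b, u x := by
  rw [intervalIntegral.integral_of_le hab]
  calc c * (b - a) = ∫ _ in Ioc a b, c := by simp [hab, mul_comm]
    _ ≤ ∫ x in Ioc a b, u x :=
        setIntegral_mono_on_ae (integrableOn_const measure_Ioc_lt_top.ne) hu measurableSet_Ioc hc

theorem mul_sub_le_integral_abs_sub_of_integral_Ioi_eq {u₁ u₂ : ℝ → ℝ} {a b c : ℝ}
    (h₁ : Integrable u₁) (h₂ : Integrable u₂) (hab : a ≤ b)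
    (hc : ∀ᵐ x, x ∈ Ioc a b → c ≤ u₁ x)
    (htail : ∫ y in Ioi a, u₁ y = ∫ y in Ioi b, u₂ y) :
    c * (b - a) ≤ ∫ x, |u₂ x - u₁ x| :=
  calc c * (b - a) ≤ ∫ x in a..b, u₁ x :=
        mul_sub_le_intervalIntegral_of_ae_le hab h₁.integrableOn hc
    _ = (∫ x in Ioi a, u₁ x) - ∫ x in Ioi b, u₁ x :=
        (intervalIntegral.integral_Ioi_sub_Ioi h₁.integrableOn hab).symm
    _ = (∫ x in Ioi b, u₂ x) - ∫ x in Ioi b, u₁ x := by rw [htail]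
    _ ≤ ∫ x, |u₂ x - u₁ x| := setIntegral_sub_le_integral_abs_sub h₂ h₁ _

theorem threshold_distance_le_L1_general
    (xbar η c : ℝ)
    (u₁ u₂ : ℝ → ℝ) (h₁ : Integrable u₁) (h₂ : Integrable u₂)
    (hl₁ : ∀ᵐ (x : ℝ) ∂volume, x ∈ Icc (xbar - η) (xbar + η) → c ≤ u₁ x)
    (hl₂ : ∀ᵐ (x : ℝ) ∂volume, x ∈ Icc (xbar - η) (xbar + η) → c ≤ u₂ x)
    (x₁ x₂ : ℝ) (hx₁ : x₁ ∈ Icc (xbar - η) (xbar + η))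
    (hx₂ : x₂ ∈ Icc (xbar - η) (xbar + η))
    (ht₁ : (∫ y in Ioi x₁, u₁ y) = 1) (ht₂ : (∫ y in Ioi x₂, u₂ y) = 1) :
    c * |x₁ - x₂| ≤ ∫ x : ℝ, |u₂ x - u₁ x| := by
  wlog hle : x₁ ≤ x₂ generalizing u₁ u₂ x₁ x₂
  · simpa only [abs_sub_comm] using
      this u₂ u₁ h₂ h₁ hl₂ hl₁ x₂ x₁ hx₂ hx₁ ht₂ ht₁ (le_of_not_ge hle)
  rw [abs_sub_comm, abs_of_nonneg (sub_nonneg.2 hle)]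
  refine mul_sub_le_integral_abs_sub_of_integral_Ioi_eq h₁ h₂ hle ?_ (ht₁.trans ht₂.symm)
  filter_upwards [hl₁] with x hx hmem
  exact hx ⟨hx₁.1.trans hmem.1.le, hmem.2.trans hx₂.2⟩

/-- If two nonnegative integrable functions are bounded below by
`c > 0` on `[x̄₀−η, x̄₀+η]`, and `x̄₁, x̄₂` in this interval are thresholds where the
respective tail integrals equal `1`, then `c·|x̄₁ − x̄₂| ≤ ‖u² − u¹‖_{L¹}`. -/
theorem threshold_distance_le_L1
    (xbar η c : ℝ) (hη : 0 < η) (hc : 0 < c)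
    (u₁ u₂ : ℝ → ℝ) (h₁ : Integrable u₁) (h₂ : Integrable u₂)
    (hp₁ : ∀ᵐ (x : ℝ) ∂volume, 0 ≤ u₁ x)
    (hp₂ : ∀ᵐ (x : ℝ) ∂volume, 0 ≤ u₂ x)
    (hl₁ : ∀ᵐ (x : ℝ) ∂volume, x ∈ Icc (xbar - η) (xbar + η) → c ≤ u₁ x)
    (hl₂ : ∀ᵐ (x : ℝ) ∂volume, x ∈ Icc (xbar - η) (xbar + η) → c ≤ u₂ x)
    (x₁ x₂ : ℝ) (hx₁ : x₁ ∈ Icc (xbar - η) (xbar + η))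
    (hx₂ : x₂ ∈ Icc (xbar - η) (xbar + η))
    (ht₁ : (∫ y in Ioi x₁, u₁ y) = 1) (ht₂ : (∫ y in Ioi x₂, u₂ y) = 1) :
    c * |x₁ - x₂| ≤ ∫ x : ℝ, |u₂ x - u₁ x| :=
  threshold_distance_le_L1_general xbar η c u₁ u₂ h₁ h₂ hl₁ hl₂ x₁ x₂ hx₁ hx₂ ht₁ ht₂
end

section
/- Let u¹, u² ∈ L¹(ℝ) ∩ L^∞(ℝ) be nonnegative, set F^i(x) := ∫_x^∞ u^i(y) dy, and suppose there exist x̄₁, x̄₂ ∈ ℝ such that { x ∈ ℝ : F^i(x) > 1 } = (−∞, x̄_i) for i = 1, 2. Then ‖ã(F¹) u¹ − ã(F²) u²‖_{L¹(ℝ)} ≤ |x̄₁ − x̄₂| · ‖u¹‖_{L^∞(ℝ)} + ‖u¹ − u²‖_{L¹(ℝ)}, and likewise ‖b̃(F¹) u¹ − b̃(F²) u²‖_{L¹(ℝ)} ≤ |x̄₁ − x̄₂| · ‖u¹‖_{L^∞(ℝ)} + ‖u¹ − u²‖_{L¹(ℝ)}. -/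
open MeasureTheory Set Filter

noncomputable section

/-- `ã(z) = 𝟙{z > 1}`. -/
def ta (z : ℝ) : ℝ := if 1 < z then 1 else 0

/-- `b̃(z) = 1 - ã(z) = 𝟙{z ≤ 1}`. -/
def tb (z : ℝ) : ℝ := 1 - ta z

/-!
Both weights are indicators of half-lines: `ã(Fⁱ) uⁱ = 𝟙_{(-∞, x̄ᵢ)} uⁱ` and
`b̃(Fⁱ) uⁱ = 𝟙_{[x̄ᵢ, ∞)} uⁱ`. Writing `𝟙_{A₁} u¹ - 𝟙_{A₂} u² = (𝟙_{A₁} - 𝟙_{A₂}) u¹ + 𝟙_{A₂} (u¹ - u²)`,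
the first term lives on `A₁ ∆ A₂`, an interval of length `|x̄₁ - x̄₂|` on which `|u¹| ≤ ‖u¹‖_∞`,
and the second is bounded by `|u¹ - u²|`.
-/

open scoped symmDiff

theorem ta_mul_eq_indicator {F : ℝ → ℝ} {s : Set ℝ} (hs : {x | 1 < F x} = s) (u : ℝ → ℝ)
    (x : ℝ) : ta (F x) * u x = s.indicator u x := by
  subst hs
  by_cases h : 1 < F x <;> simp [ta, h]

theorem tb_mul_eq_indicator {F : ℝ → ℝ} {s : Set ℝ} (hs : {x | 1 < F x} = s) (u : ℝ → ℝ)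
    (x : ℝ) : tb (F x) * u x = sᶜ.indicator u x := by
  subst hs
  by_cases h : 1 < F x <;> simp [tb, ta, h]

theorem Set.Iio_symmDiff_Iio {α : Type*} [LinearOrder α] (a b : α) :
    Iio a ∆ Iio b = Ico (min a b) (max a b) := by
  ext x
  simp only [mem_symmDiff, mem_Iio, mem_Ico, min_le_iff, lt_max_iff, not_lt]
  grind

theorem norm_indicator_sub_indicator_le {α E : Type*} [NormedAddCommGroup E] (s t : Set α)
    (f g : α → E) (x : α) :
    ‖s.indicator f x - t.indicator g x‖ ≤ (s ∆ t).indicator (‖f ·‖) x + ‖f x - g x‖ := by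
  have hsplit : s.indicator f x - t.indicator g x
      = (s.indicator f x - t.indicator f x) + t.indicator (f - g) x := by
    rw [indicator_sub', Pi.sub_apply]
    abel
  calc ‖s.indicator f x - t.indicator g x‖
      ≤ ‖s.indicator f x - t.indicator f x‖ + ‖t.indicator (f - g) x‖ :=
        hsplit ▸ norm_add_le _ _
    _ ≤ (s ∆ t).indicator (‖f ·‖) x + ‖f x - g x‖ := by
        gcongr
        · rw [← apply_indicator_symmDiff norm_neg, norm_indicator_eq_indicator_norm]
        · exact norm_indicator_le_norm_self _ _

theorem integral_norm_indicator_sub_indicator_le {α E : Type*} [MeasurableSpace α]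
    {μ : Measure α} [NormedAddCommGroup E] {s t : Set α} (hs : MeasurableSet s)
    (ht : MeasurableSet t) {f g : α → E} (hf : Integrable f μ) (hg : Integrable g μ) :
    ∫ x, ‖s.indicator f x - t.indicator g x‖ ∂μ
      ≤ ∫ x in s ∆ t, ‖f x‖ ∂μ + ∫ x, ‖f x - g x‖ ∂μ := by
  have hst : MeasurableSet (s ∆ t) := hs.symmDiff ht
  have hfg : Integrable (fun x => ‖f x - g x‖) μ := (hf.sub hg).norm
  rw [← integral_indicator hst, ← integral_add (hf.norm.indicator hst) hfg]
  exact integral_mono ((hf.indicator hs).sub (hg.indicator ht)).norm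
    ((hf.norm.indicator hst).add hfg) (norm_indicator_sub_indicator_le s t f g)

theorem setIntegral_norm_symmDiff_Iio_le {E : Type*} [NormedAddCommGroup E] {u : ℝ → E}
    {C : ℝ} (hC : ∀ᵐ x, ‖u x‖ ≤ C) (a b : ℝ) :
    ∫ x in Iio a ∆ Iio b, ‖u x‖ ≤ |a - b| * C := by
  rw [Iio_symmDiff_Iio]
  have hbound := norm_setIntegral_le_of_norm_le_const_ae (s := Ico (min a b) (max a b))
    (f := (‖u ·‖)) measure_Ico_lt_top (ae_restrict_of_ae (hC.mono fun x hx => by rwa [norm_norm]))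
  rw [Real.volume_real_Ico_of_le min_le_max, max_sub_min_eq_abs', mul_comm] at hbound
  exact (Real.le_norm_self _).trans hbound

theorem advect_birth_L1_bound_general
    (u₁ u₂ : ℝ → ℝ) (h₁ : Integrable u₁) (h₂ : Integrable u₂)
    (x₁ x₂ : ℝ)
    (hs₁ : {x : ℝ | 1 < ∫ y in Ioi x, u₁ y} = Iio x₁)
    (hs₂ : {x : ℝ | 1 < ∫ y in Ioi x, u₂ y} = Iio x₂)
    (C : ℝ) (hC : ∀ᵐ (x : ℝ) ∂volume, |u₁ x| ≤ C) :
    ((∫ x : ℝ, |ta (∫ y in Ioi x, u₁ y) * u₁ x - ta (∫ y in Ioi x, u₂ y) * u₂ x|)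
        ≤ |x₁ - x₂| * C + ∫ x : ℝ, |u₁ x - u₂ x|) ∧
    ((∫ x : ℝ, |tb (∫ y in Ioi x, u₁ y) * u₁ x - tb (∫ y in Ioi x, u₂ y) * u₂ x|)
        ≤ |x₁ - x₂| * C + ∫ x : ℝ, |u₁ x - u₂ x|) := by
  simp only [ta_mul_eq_indicator hs₁, ta_mul_eq_indicator hs₂, tb_mul_eq_indicator hs₁,
    tb_mul_eq_indicator hs₂, ← Real.norm_eq_abs] at hC ⊢
  have hgap : ∫ x in Iio x₁ ∆ Iio x₂, ‖u₁ x‖ ≤ ‖x₁ - x₂‖ * C := by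
    simpa only [Real.norm_eq_abs] using setIntegral_norm_symmDiff_Iio_le hC x₁ x₂
  constructor
  · refine (integral_norm_indicator_sub_indicator_le measurableSet_Iio measurableSet_Iio
      h₁ h₂).trans ?_
    gcongr
  · refine (integral_norm_indicator_sub_indicator_le measurableSet_Iio.compl measurableSet_Iio.compl
      h₁ h₂).trans ?_
    rw [compl_symmDiff_compl]
    gcongr

/-- For nonnegative `u¹, u² ∈ L¹ ∩ L^∞` with tail functions
`Fⁱ(x) = ∫_x^∞ uⁱ` whose super-level sets `{Fⁱ > 1}` equal `(−∞, x̄ᵢ)`,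
‖ã(F¹)u¹ − ã(F²)u²‖₁ ≤ |x̄₁ − x̄₂|·‖u¹‖_∞ + ‖u¹ − u²‖₁, and likewise for `b̃`. -/
theorem advect_birth_L1_bound
    (u₁ u₂ : ℝ → ℝ) (h₁ : Integrable u₁) (h₂ : Integrable u₂)
    (hb₂ : ∃ M : ℝ, ∀ᵐ (x : ℝ) ∂volume, |u₂ x| ≤ M)
    (hp₁ : ∀ᵐ (x : ℝ) ∂volume, 0 ≤ u₁ x)
    (hp₂ : ∀ᵐ (x : ℝ) ∂volume, 0 ≤ u₂ x)
    (x₁ x₂ : ℝ)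
    (hs₁ : {x : ℝ | 1 < ∫ y in Ioi x, u₁ y} = Iio x₁)
    (hs₂ : {x : ℝ | 1 < ∫ y in Ioi x, u₂ y} = Iio x₂)
    (C : ℝ) (hC : ∀ᵐ (x : ℝ) ∂volume, |u₁ x| ≤ C) :
    ((∫ x : ℝ, |ta (∫ y in Ioi x, u₁ y) * u₁ x - ta (∫ y in Ioi x, u₂ y) * u₂ x|)
        ≤ |x₁ - x₂| * C + ∫ x : ℝ, |u₁ x - u₂ x|) ∧
    ((∫ x : ℝ, |tb (∫ y in Ioi x, u₁ y) * u₁ x - tb (∫ y in Ioi x, u₂ y) * u₂ x|)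
        ≤ |x₁ - x₂| * C + ∫ x : ℝ, |u₁ x - u₂ x|) :=
  advect_birth_L1_bound_general u₁ u₂ h₁ h₂ x₁ x₂ hs₁ hs₂ C hC
end
end

section
/- Let N ≥ 1 and K ≥ 1 be integers, let x₁ > x₂ > … > x_N be real numbers, let ψ : ℝ → ℝ be continuous with compact support, and set Ψ(x) := ∫_{−∞}^x ψ(y) dy. For x ∈ ℝ set F(x) := (1/K) · #{ i ∈ {1,…,N} : x_i ≥ x } and A(z) := max(z − 1, 0). Then (1/K) ∑_{i=1}^N Ψ(x_i) · 𝟙{i > K} = ∫_ℝ ψ(x) A(F(x)) dx. -/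
/-!
Since `Ψ(xᵢ) = ∫ ψ(z) 𝟙{z ≤ xᵢ} dz`, exchanging the finite sum with the integral turns the left
side into `∫ ψ(z) · #{i > K : xᵢ ≥ z} / K dz`. As `x` is decreasing, `{i : xᵢ ≥ z}` is the initial
segment `{1, …, K F(z)}`, so the count is `(K F(z) - K)⁺ = K · A(F(z))`.
-/

open MeasureTheory Set Filter

noncomputable section

/-- `A(z) = max(z - 1, 0)`, the antiderivative of `ã(z) = 𝟙{z > 1}`. -/
def Afun (z : ℝ) : ℝ := max (z - 1) 0

/-- `B(z) = min(z, 1)`, the antiderivative of `b̃(z) = 𝟙{z ≤ 1}`. -/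
def Bfun (z : ℝ) : ℝ := min z 1

open scoped Classical

theorem Afun_natCast_div (c K : ℕ) : Afun ((c : ℝ) / K) = ((c - K : ℕ) : ℝ) / K := by
  rcases K.eq_zero_or_pos with rfl | hK
  · simp [Afun]
  have hK' : (0 : ℝ) < K := by exact_mod_cast hK
  rcases le_total K c with h | h
  · rw [Nat.cast_sub h, Afun, max_eq_left]
    · field_simp
    · rw [sub_nonneg, one_le_div hK']
      exact_mod_cast h
  · rw [Nat.sub_eq_zero_of_le h, Afun, max_eq_right]
    · simp
    · rw [sub_nonpos, div_le_one hK']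
      exact_mod_cast h

theorem Finset.eq_Icc_one_card_of_Icc_subset {s : Finset ℕ}
    (hs : ∀ i ∈ s, 1 ≤ i ∧ Finset.Icc 1 i ⊆ s) : s = Finset.Icc 1 s.card := by
  refine Finset.eq_of_subset_of_card_le (fun i hi => ?_) (by simp)
  obtain ⟨hi1, hsub⟩ := hs i hi
  have := Finset.card_le_card hsub
  rw [Nat.card_Icc, Nat.add_sub_cancel] at this
  exact Finset.mem_Icc.2 ⟨hi1, this⟩

theorem AntitoneOn.filter_le_eq_Icc_card {α : Type*} [Preorder α] {x : ℕ → α} {N : ℕ}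
    (hx : AntitoneOn x (Set.Icc 1 N)) (z : α) :
    (Finset.Icc 1 N).filter (fun i => z ≤ x i)
      = Finset.Icc 1 ((Finset.Icc 1 N).filter (fun i => z ≤ x i)).card := by
  refine Finset.eq_Icc_one_card_of_Icc_subset fun i hi => ?_
  simp only [Finset.mem_filter, Finset.mem_Icc] at hi
  refine ⟨hi.1.1, fun j hj => ?_⟩
  simp only [Finset.mem_Icc] at hj
  simp only [Finset.mem_filter, Finset.mem_Icc]
  exact ⟨⟨hj.1, hj.2.trans hi.1.2⟩,
    hi.2.trans (hx ⟨hj.1, hj.2.trans hi.1.2⟩ ⟨hi.1.1, hi.1.2⟩ hj.2)⟩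

theorem AntitoneOn.card_filter_lt_filter_le {α : Type*} [Preorder α] {x : ℕ → α} {N : ℕ}
    (hx : AntitoneOn x (Set.Icc 1 N)) (K : ℕ) (z : α) :
    (((Finset.Icc 1 N).filter (K < ·)).filter (fun i => z ≤ x i)).card
      = ((Finset.Icc 1 N).filter (fun i => z ≤ x i)).card - K := by
  have hsuper := hx.filter_le_eq_Icc_card z
  set m := ((Finset.Icc 1 N).filter (fun i => z ≤ x i)).card
  rw [Finset.filter_comm, hsuper]
  have htail : (Finset.Icc 1 m).filter (K < ·) = Finset.Icc (K + 1) m := by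
    ext i
    simp only [Finset.mem_filter, Finset.mem_Icc]
    omega
  rw [htail, Nat.card_Icc]
  omega

theorem sum_setIntegral_Iic_eq_integral_mul_card {ι : Type*} (s : Finset ι) (x : ι → ℝ)
    {ψ : ℝ → ℝ} (hψ : Integrable ψ) :
    ∑ i ∈ s, ∫ y in Iic (x i), ψ y = ∫ z, ψ z * (s.filter (fun i => z ≤ x i)).card := by
  simp_rw [← integral_indicator measurableSet_Iic]
  rw [← integral_finsetSum _ fun i _ => hψ.indicator measurableSet_Iic]
  congr 1 with z
  simp [Set.indicator_apply, Finset.sum_ite, mul_comm]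

theorem discrete_ibp_drift_general
    (N K : ℕ) (x : ℕ → ℝ)
    (hdec : ∀ i j, 1 ≤ i → i < j → j ≤ N → x j < x i)
    (ψ : ℝ → ℝ) (hψc : Continuous ψ) (hψs : HasCompactSupport ψ) :
    (1 / (K:ℝ)) * ∑ i ∈ Finset.Icc 1 N,
        (∫ y in Iic (x i), ψ y) * (if K < i then (1:ℝ) else 0)
      = ∫ z : ℝ, ψ z * Afun ((((Finset.Icc 1 N).filter fun i => z ≤ x i).card : ℝ) / K) := by
  have hx : AntitoneOn x (Set.Icc 1 N) :=
    StrictAntiOn.antitoneOn fun i hi j hj hij => hdec i j hi.1 hij hj.2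
  simp only [mul_ite, mul_one, mul_zero]
  rw [← Finset.sum_filter,
    sum_setIntegral_Iic_eq_integral_mul_card _ _ (hψc.integrable_of_hasCompactSupport hψs),
    ← integral_const_mul]
  congr 1 with z
  rw [hx.card_filter_lt_filter_le, Afun_natCast_div]
  ring

/-- **discrete integration by parts, drift term.** For strictly decreasing
positions `x₁ > … > x_N`, `Ψ(x) = ∫_{−∞}^x ψ`, and the empirical tail function
`F(z) = (1/K)·#{i : xᵢ ≥ z}`:
`(1/K) ∑_{i=1}^N Ψ(xᵢ)·𝟙{i > K} = ∫ ψ(z) A(F(z)) dz`. -/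
theorem discrete_ibp_drift
    (N K : ℕ) (hN : 1 ≤ N) (hK : 1 ≤ K) (x : ℕ → ℝ)
    (hdec : ∀ i j, 1 ≤ i → i < j → j ≤ N → x j < x i)
    (ψ : ℝ → ℝ) (hψc : Continuous ψ) (hψs : HasCompactSupport ψ) :
    (1 / (K:ℝ)) * ∑ i ∈ Finset.Icc 1 N,
        (∫ y in Iic (x i), ψ y) * (if K < i then (1:ℝ) else 0)
      = ∫ z : ℝ, ψ z * Afun ((((Finset.Icc 1 N).filter fun i => z ≤ x i).card : ℝ) / K) :=
  discrete_ibp_drift_general N K x hdec ψ hψc hψs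
end
end

section
/- Let N ≥ 1 and K ≥ 1 be integers, let x₁ > x₂ > … > x_N be real numbers, let ψ : ℝ → ℝ be continuous with compact support, and set Ψ(x) := ∫_{−∞}^x ψ(y) dy. For x ∈ ℝ set F(x) := (1/K) · #{ i ∈ {1,…,N} : x_i ≥ x } and B(z) := min(z, 1). Then (1/K) ∑_{i=1}^N Ψ(x_i) · 𝟙{i ≤ K} = ∫_ℝ ψ(x) B(F(x)) dx. -/
open MeasureTheory Set Filter

noncomputable section

open scoped Classical

/-!
Since the positions decrease, the set of indices `i` with `z ≤ xᵢ` is the initial segment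
`{1, …, c(z)}` with `c(z) = K · F(z)`, so `#{i ≤ K : z ≤ xᵢ} = min(c(z), K) = K · B(F(z))`.
Writing `Ψ(xᵢ) = ∫ ψ · 𝟙_{(-∞, xᵢ]}` and exchanging the finite sum with the integral, the left
side becomes `(1/K) ∫ ψ(z) · #{i ≤ K : z ≤ xᵢ} dz`, which is the right side.
-/

theorem Finset.eq_Icc_one_card_of_downward_closed {S : Finset ℕ} (hpos : ∀ i ∈ S, 1 ≤ i)
    (hdown : ∀ i ∈ S, ∀ j, 1 ≤ j → j ≤ i → j ∈ S) : S = Finset.Icc 1 S.card := by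
  refine Finset.eq_of_subset_of_card_le
    (fun i hi => Finset.mem_Icc.mpr ⟨hpos i hi, ?_⟩) (by simp)
  have hsub : Finset.Icc 1 i ⊆ S := fun j hj =>
    hdown i hi j (Finset.mem_Icc.mp hj).1 (Finset.mem_Icc.mp hj).2
  simpa using Finset.card_le_card hsub

theorem filter_le_eq_Icc_one_card_of_antitoneOn {N : ℕ} {x : ℕ → ℝ}
    (hx : AntitoneOn x (Icc 1 N)) (z : ℝ) :
    (Finset.Icc 1 N).filter (fun i => z ≤ x i)
      = Finset.Icc 1 ((Finset.Icc 1 N).filter fun i => z ≤ x i).card := by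
  refine Finset.eq_Icc_one_card_of_downward_closed
    (fun i hi => (Finset.mem_Icc.mp (Finset.mem_filter.mp hi).1).1) fun i hi j hj hji => ?_
  simp only [Finset.mem_filter, Finset.mem_Icc] at hi ⊢
  exact ⟨⟨hj, hji.trans hi.1.2⟩, hi.2.trans (hx ⟨hj, hji.trans hi.1.2⟩ hi.1 hji)⟩

theorem card_filter_le_filter_le_eq_min {N : ℕ} {x : ℕ → ℝ}
    (hx : AntitoneOn x (Icc 1 N)) (z : ℝ) (K : ℕ) :
    (((Finset.Icc 1 N).filter (· ≤ K)).filter fun i => z ≤ x i).card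
      = min ((Finset.Icc 1 N).filter fun i => z ≤ x i).card K := by
  set c := ((Finset.Icc 1 N).filter fun i => z ≤ x i).card
  have hIcc : (Finset.Icc 1 c).filter (· ≤ K) = Finset.Icc 1 (min c K) := by
    ext i
    simp only [Finset.mem_filter, Finset.mem_Icc, le_min_iff]
    omega
  rw [Finset.filter_comm, filter_le_eq_Icc_one_card_of_antitoneOn hx z, hIcc, Nat.card_Icc,
    Nat.add_sub_cancel]

theorem Finset.sum_indicator_Iic_eq_card_mul {ι : Type*} (T : Finset ι) (x : ι → ℝ)
    (ψ : ℝ → ℝ) (z : ℝ) :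
    ∑ i ∈ T, (Set.Iic (x i)).indicator ψ z = (T.filter fun i => z ≤ x i).card * ψ z := by
  simp only [indicator_apply, Set.mem_Iic]
  rw [Finset.sum_ite, Finset.sum_const_zero, add_zero, Finset.sum_const, nsmul_eq_mul]

theorem Bfun_div_of_nonneg (a : ℝ) {K : ℝ} (hK : 0 ≤ K) : Bfun (a / K) = min a K / K := by
  rcases hK.eq_or_lt with rfl | hK
  · simp [Bfun]
  · rw [Bfun, show (1 : ℝ) = K / K from (div_self hK.ne').symm, min_div_div_right hK.le]

theorem discrete_ibp_branching_general
    (N K : ℕ) (x : ℕ → ℝ)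
    (hdec : ∀ i j, 1 ≤ i → i < j → j ≤ N → x j < x i)
    (ψ : ℝ → ℝ) (hψc : Continuous ψ) (hψs : HasCompactSupport ψ) :
    (1 / (K:ℝ)) * ∑ i ∈ Finset.Icc 1 N,
        (∫ y in Iic (x i), ψ y) * (if i ≤ K then (1:ℝ) else 0)
      = ∫ z : ℝ, ψ z * Bfun ((((Finset.Icc 1 N).filter fun i => z ≤ x i).card : ℝ) / K) := by
  have hx : AntitoneOn x (Icc 1 N) :=
    StrictAntiOn.antitoneOn fun i hi j hj hij => hdec i j hi.1 hij hj.2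
  have hψ : Integrable ψ := hψc.integrable_of_hasCompactSupport hψs
  set T := (Finset.Icc 1 N).filter (· ≤ K)
  have hpointwise (z : ℝ) :
      ψ z * Bfun ((((Finset.Icc 1 N).filter fun i => z ≤ x i).card : ℝ) / K)
        = 1 / K * ∑ i ∈ T, (Iic (x i)).indicator ψ z := by
    rw [Finset.sum_indicator_Iic_eq_card_mul, card_filter_le_filter_le_eq_min hx,
      Bfun_div_of_nonneg _ K.cast_nonneg, Nat.cast_min]
    ring
  calc (1 / (K:ℝ)) * ∑ i ∈ Finset.Icc 1 N, (∫ y in Iic (x i), ψ y) * (if i ≤ K then 1 else 0)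
      = 1 / K * ∑ i ∈ T, ∫ z, (Iic (x i)).indicator ψ z := by
        simp_rw [mul_ite, mul_one, mul_zero, ← Finset.sum_filter,
          integral_indicator measurableSet_Iic]
        rfl
    _ = ∫ z, ψ z * Bfun ((((Finset.Icc 1 N).filter fun i => z ≤ x i).card : ℝ) / K) := by
        rw [← integral_finsetSum _ fun i _ => hψ.indicator measurableSet_Iic,
          ← integral_const_mul]
        exact integral_congr_ae (Eventually.of_forall fun z => (hpointwise z).symm)

/-- **discrete integration by parts, branching term.** For strictly
decreasing positions `x₁ > … > x_N`, `Ψ(x) = ∫_{−∞}^x ψ`, and the empirical tail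
function `F(z) = (1/K)·#{i : xᵢ ≥ z}`:
`(1/K) ∑_{i=1}^N Ψ(xᵢ)·𝟙{i ≤ K} = ∫ ψ(z) B(F(z)) dz`. -/
theorem discrete_ibp_branching
    (N K : ℕ) (hN : 1 ≤ N) (hK : 1 ≤ K) (x : ℕ → ℝ)
    (hdec : ∀ i j, 1 ≤ i → i < j → j ≤ N → x j < x i)
    (ψ : ℝ → ℝ) (hψc : Continuous ψ) (hψs : HasCompactSupport ψ) :
    (1 / (K:ℝ)) * ∑ i ∈ Finset.Icc 1 N,
        (∫ y in Iic (x i), ψ y) * (if i ≤ K then (1:ℝ) else 0)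
      = ∫ z : ℝ, ψ z * Bfun ((((Finset.Icc 1 N).filter fun i => z ≤ x i).card : ℝ) / K) :=
  discrete_ibp_branching_general N K x hdec ψ hψc hψs
end
end

section
/- Let α ∈ (0,1) and T > 0, and let G ∈ L^∞([0,T] × ℝ) be measurable. There exists a constant C > 0, depending only on α, such that for every t ∈ [0,T] the function w_t := ∫_0^t ∂_x e^{(t−s)∂_x²} G_s ds satisfies ‖w_t‖_{C^{0,α}(ℝ)} ≤ C ( √t + t^{(1−α)/2} ) ‖G‖_{L^∞([0,T]×ℝ)}. -/
open MeasureTheory Set Filter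

noncomputable section

/-- The heat kernel on `ℝ`: `(4πt)^{-1/2} exp(-x²/(4t))`. -/
def heatKernel (t x : ℝ) : ℝ :=
  (Real.sqrt (4 * Real.pi * t))⁻¹ * Real.exp (-(x ^ 2) / (4 * t))

/-- The heat semigroup `e^{t ∂_x²}` acting on functions on `ℝ`
(for `t = 0` it is the identity). -/
def heatOp (t : ℝ) (f : ℝ → ℝ) : ℝ → ℝ :=
  if t = 0 then f else fun x => ∫ y : ℝ, heatKernel t (x - y) * f y

/-!
Differentiating under the integral, `∂ₓ e^{τ∂ₓ²} f` is the convolution of `f` with `∂_z` of the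
heat kernel. The first two `z`-derivatives of the heat kernel are dominated by multiples of a wider
Gaussian, which gives `|∂ₓ e^{τ∂ₓ²} f| ≲ τ^{-1/2} ‖f‖_∞` and `Lip (∂ₓ e^{τ∂ₓ²} f) ≲ τ^{-1} ‖f‖_∞`.
Interpolating, `min (τ^{-1/2}, τ^{-1} |x - y|) ≤ τ^{-(1+α)/2} |x - y|^α`, so both bounds are
integrable singularities at `τ = t - s → 0`, and integrating over `s ∈ (0, t)` yields the factors
`√t` and `t^{(1-α)/2} / (1 - α)`.
-/

open Real

lemma nonneg_of_ae_abs_le {f : ℝ → ℝ} {M : ℝ} (hf : ∀ᵐ y, |f y| ≤ M) : 0 ≤ M :=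
  let ⟨_, hy⟩ := hf.exists
  (abs_nonneg _).trans hy

lemma abs_mul_exp_neg_mul_sq_le {b : ℝ} (hb : 0 < b) (z : ℝ) :
    |z| * exp (-(b * z ^ 2)) ≤ (√b)⁻¹ := by
  have hs : 0 < √b := sqrt_pos.2 hb
  rw [exp_neg, mul_inv_le_iff₀ (exp_pos _), le_inv_mul_iff₀ hs]
  -- `2 √b |z| ≤ 1 + b z² ≤ exp (b z²)`
  nlinarith [add_one_le_exp (b * z ^ 2), sq_nonneg (√b * |z| - 1), sq_sqrt hb.le, sq_abs z]

lemma sq_mul_exp_neg_mul_sq_le {b : ℝ} (hb : 0 < b) (z : ℝ) :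
    z ^ 2 * exp (-(b * z ^ 2)) ≤ b⁻¹ := by
  rw [exp_neg, mul_inv_le_iff₀ (exp_pos _), le_inv_mul_iff₀ hb]
  linarith [add_one_le_exp (b * z ^ 2)]

lemma exp_neg_mul_sub_sq_le {b x x₀ : ℝ} (hb : 0 < b) (hx : |x - x₀| < 1) (y : ℝ) :
    exp (-(b * (x - y) ^ 2)) ≤ exp b * exp (-(b / 2 * (x₀ - y) ^ 2)) := by
  rw [← exp_add, exp_le_exp]
  have h1 : (x - x₀) ^ 2 < 1 := by nlinarith [abs_lt.mp hx, sq_abs (x - x₀)]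
  have h2 : (x₀ - y) ^ 2 ≤ 2 * (x - y) ^ 2 + 2 := by nlinarith [sq_nonneg (x - y - (x₀ - x))]
  nlinarith [mul_le_mul_of_nonneg_left h2 (by positivity : (0:ℝ) ≤ b / 2)]

lemma integrable_exp_neg_mul_sub_sq {b : ℝ} (hb : 0 < b) (x : ℝ) :
    Integrable fun y => exp (-(b * (x - y) ^ 2)) :=
  (integrable_comp_sub_left (fun y => exp (-(b * y ^ 2))) x).2 <| by
    simpa only [neg_mul] using integrable_exp_neg_mul_sq hb

lemma min_le_rpow_mul_rpow {a b α : ℝ} (ha : 0 ≤ a) (hb : 0 ≤ b) (hα0 : 0 ≤ α) (hα1 : α ≤ 1) :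
    min a b ≤ a ^ (1 - α) * b ^ α := by
  calc min a b = min a b ^ (1 - α) * min a b ^ α := by
        rw [← rpow_add' (le_min ha hb) (by norm_num), sub_add_cancel, rpow_one]
    _ ≤ a ^ (1 - α) * b ^ α := by
        have := le_min ha hb
        gcongr
        exacts [min_le_left a b, min_le_right a b]

lemma min_rpow_neg_half_le {τ r α : ℝ} (hτ : 0 < τ) (hr : 0 ≤ r) (hα0 : 0 ≤ α) (hα1 : α ≤ 1) :
    min (τ ^ (-(1 / 2) : ℝ)) (r * τ ^ (-1 : ℝ)) ≤ r ^ α * τ ^ (-((1 + α) / 2)) := by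
  refine (min_le_rpow_mul_rpow (by positivity) (by positivity) hα0 hα1).trans_eq ?_
  rw [mul_rpow hr (by positivity), ← rpow_mul hτ.le, ← rpow_mul hτ.le, mul_left_comm,
    ← rpow_add hτ]
  ring_nf

def kernelConv (k f : ℝ → ℝ) (x : ℝ) : ℝ := ∫ y, k (x - y) * f y

section KernelConv

variable {k k' f : ℝ → ℝ} {b c c' M : ℝ}

lemma abs_kernelConv_le (hb : 0 < b) (hk : ∀ z, |k z| ≤ c * exp (-(b * z ^ 2)))
    (hf : ∀ᵐ y, |f y| ≤ M) (x : ℝ) : |kernelConv k f x| ≤ c * M * √(π / b) := by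
  calc |kernelConv k f x| = ‖∫ y, k (x - y) * f y‖ := (norm_eq_abs _).symm
    _ ≤ ∫ y, c * M * exp (-(b * (x - y) ^ 2)) := by
        refine norm_integral_le_of_norm_le ((integrable_exp_neg_mul_sub_sq hb x).const_mul _) ?_
        filter_upwards [hf] with y hy
        rw [norm_mul, norm_eq_abs, norm_eq_abs, mul_right_comm]
        exact mul_le_mul (hk _) hy (abs_nonneg _) ((abs_nonneg _).trans (hk _))
    _ = c * M * √(π / b) := by
        rw [integral_const_mul, integral_sub_left_eq_self (fun y => exp (-(b * y ^ 2))),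
          ← integral_gaussian]
        simp only [neg_mul]

lemma hasDerivAt_kernelConv (hb : 0 < b) (hk : ∀ z, HasDerivAt k (k' z) z)
    (hkb : ∀ z, |k z| ≤ c * exp (-(b * z ^ 2)))
    (hk'b : ∀ z, |k' z| ≤ c' * exp (-(b * z ^ 2))) (hfm : Measurable f)
    (hf : ∀ᵐ y, |f y| ≤ M) (x₀ : ℝ) :
    HasDerivAt (kernelConv k f) (kernelConv k' f x₀) x₀ := by
  have hc' : 0 ≤ c' := by simpa using (abs_nonneg _).trans (hk'b 0)
  have hkm : Measurable k := (continuous_iff_continuousAt.2 fun z => (hk z).continuousAt).measurable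
  have hk'm : Measurable k' := by
    rw [show k' = deriv k from funext fun z => (hk z).deriv.symm]
    exact measurable_deriv k
  have hmeas : ∀ x, AEStronglyMeasurable (fun y => k (x - y) * f y) :=
    fun x => ((hkm.comp (measurable_const.sub measurable_id)).mul hfm).aestronglyMeasurable
  have hint : Integrable fun y => k (x₀ - y) * f y := by
    refine (((integrable_exp_neg_mul_sub_sq hb x₀).const_mul c).mul_const M).mono' (hmeas x₀) ?_
    filter_upwards [hf] with y hy
    rw [norm_mul, norm_eq_abs, norm_eq_abs]
    exact mul_le_mul (hkb _) hy (abs_nonneg _) ((abs_nonneg _).trans (hkb _))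
  have hdom : ∀ᵐ y, ∀ x ∈ Metric.ball x₀ 1,
      ‖k' (x - y) * f y‖ ≤ c' * exp b * M * exp (-(b / 2 * (x₀ - y) ^ 2)) := by
    filter_upwards [hf] with y hy x hx
    rw [norm_mul, norm_eq_abs, norm_eq_abs, mul_right_comm, mul_assoc c']
    refine mul_le_mul ((hk'b _).trans ?_) hy (abs_nonneg _) (by positivity)
    exact mul_le_mul_of_nonneg_left (exp_neg_mul_sub_sq_le hb (Metric.mem_ball.1 hx) y) hc'
  exact (hasDerivAt_integral_of_dominated_loc_of_deriv_le (𝕜 := ℝ) (Metric.ball_mem_nhds x₀ one_pos)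
    (Eventually.of_forall hmeas) hint
    ((hk'm.comp (measurable_const.sub measurable_id)).mul hfm).aestronglyMeasurable hdom
    ((integrable_exp_neg_mul_sub_sq (half_pos hb) x₀).const_mul _)
    (Eventually.of_forall fun y x _ =>
      ((hk (x - y)).comp_sub_const x y).mul_const (f y))).2

end KernelConv

def heatKernel' (τ z : ℝ) : ℝ := -(z / (2 * τ)) * heatKernel τ z

def heatKernel'' (τ z : ℝ) : ℝ := (z ^ 2 / (4 * τ ^ 2) - 1 / (2 * τ)) * heatKernel τ z

section HeatKernel

variable {τ : ℝ}

lemma hasDerivAt_heatKernel (hτ : τ ≠ 0) (z : ℝ) :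
    HasDerivAt (heatKernel τ) (heatKernel' τ z) z := by
  have hE : HasDerivAt (fun z : ℝ => -(z ^ 2) / (4 * τ)) (-(2 * z) / (4 * τ)) z := by
    simpa using ((hasDerivAt_pow 2 z).neg).div_const (4 * τ)
  refine (hE.exp.const_mul (√(4 * π * τ))⁻¹).congr_deriv ?_
  rw [heatKernel', heatKernel]
  field_simp
  ring

lemma hasDerivAt_heatKernel' (hτ : τ ≠ 0) (z : ℝ) :
    HasDerivAt (heatKernel' τ) (heatKernel'' τ z) z := by
  have hL : HasDerivAt (fun z : ℝ => -(z / (2 * τ))) (-(1 / (2 * τ))) z :=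
    ((hasDerivAt_id' z).div_const (2 * τ)).neg
  refine (hL.mul (hasDerivAt_heatKernel hτ z)).congr_deriv ?_
  rw [heatKernel'', heatKernel']
  field_simp
  ring

lemma heatKernel_nonneg (z : ℝ) : 0 ≤ heatKernel τ z := by
  unfold heatKernel
  positivity

-- Half of the Gaussian decay absorbs the polynomial factors of the kernel's derivatives.
lemma heatKernel_eq_mul_exp_mul_exp (hτ : τ ≠ 0) (z : ℝ) :
    heatKernel τ z =
      (√(4 * π * τ))⁻¹ * exp (-((8 * τ)⁻¹ * z ^ 2)) * exp (-((8 * τ)⁻¹ * z ^ 2)) := by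
  rw [heatKernel, mul_assoc _ (exp _), ← exp_add]
  congr 2
  field_simp
  ring

lemma abs_heatKernel_le (hτ : 0 < τ) (z : ℝ) :
    |heatKernel τ z| ≤ (√(4 * π * τ))⁻¹ * exp (-((8 * τ)⁻¹ * z ^ 2)) := by
  rw [abs_of_nonneg (heatKernel_nonneg z), heatKernel_eq_mul_exp_mul_exp hτ.ne']
  exact mul_le_of_le_one_right (by positivity) (exp_le_one_iff.2 (neg_nonpos.2 (by positivity)))

lemma abs_heatKernel'_le (hτ : 0 < τ) (z : ℝ) :
    |heatKernel' τ z| ≤ (√(4 * π * τ))⁻¹ * (2 / √τ) * exp (-((8 * τ)⁻¹ * z ^ 2)) := by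
  set g := exp (-((8 * τ)⁻¹ * z ^ 2))
  have hst : 0 < √τ := sqrt_pos.2 hτ
  have hzg : |z| * g ≤ 3 * √τ := by
    have h := abs_mul_exp_neg_mul_sq_le (inv_pos.2 (by positivity : (0:ℝ) < 8 * τ)) z
    rw [sqrt_inv, inv_inv, sqrt_mul (by norm_num)] at h
    have : √8 ≤ 3 := sqrt_le_iff.2 ⟨by norm_num, by norm_num⟩
    nlinarith
  have hquot : |z| * g / (2 * τ) ≤ 2 / √τ := by
    rw [div_le_div_iff₀ (by positivity) hst]
    nlinarith [mul_le_mul_of_nonneg_right hzg hst.le, sq_sqrt hτ.le]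
  calc |heatKernel' τ z| = (√(4 * π * τ))⁻¹ * g * (|z| * g / (2 * τ)) := by
        rw [heatKernel', abs_mul, abs_neg, abs_div, abs_of_pos (by positivity : 0 < 2 * τ),
          abs_of_nonneg (heatKernel_nonneg z), heatKernel_eq_mul_exp_mul_exp hτ.ne']
        ring
    _ ≤ (√(4 * π * τ))⁻¹ * g * (2 / √τ) := by gcongr
    _ = (√(4 * π * τ))⁻¹ * (2 / √τ) * g := by ring

lemma abs_heatKernel''_le (hτ : 0 < τ) (z : ℝ) :
    |heatKernel'' τ z| ≤ (√(4 * π * τ))⁻¹ * (3 / τ) * exp (-((8 * τ)⁻¹ * z ^ 2)) := by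
  set g := exp (-((8 * τ)⁻¹ * z ^ 2))
  have hz2g : z ^ 2 * g ≤ 8 * τ := by
    have h := sq_mul_exp_neg_mul_sq_le (inv_pos.2 (by positivity : (0:ℝ) < 8 * τ)) z
    rwa [inv_inv] at h
  have hg : g ≤ 1 := exp_le_one_iff.2 (neg_nonpos.2 (by positivity))
  have hfactor : |z ^ 2 / (4 * τ ^ 2) - 1 / (2 * τ)| * g ≤ 3 / τ := by
    calc |z ^ 2 / (4 * τ ^ 2) - 1 / (2 * τ)| * g ≤ (z ^ 2 / (4 * τ ^ 2) + 1 / (2 * τ)) * g := by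
          gcongr
          exact (abs_sub _ _).trans (by rw [abs_of_nonneg (by positivity),
            abs_of_pos (by positivity)])
      _ = z ^ 2 * g / (4 * τ ^ 2) + g / (2 * τ) := by ring
      _ ≤ 8 * τ / (4 * τ ^ 2) + 1 / (2 * τ) := by gcongr
      _ ≤ 3 / τ := by
          rw [div_add_div _ _ (by positivity) (by positivity), div_le_div_iff₀ (by positivity) hτ]
          nlinarith [pow_pos hτ 3]
  calc |heatKernel'' τ z| = (√(4 * π * τ))⁻¹ * g * (|z ^ 2 / (4 * τ ^ 2) - 1 / (2 * τ)| * g) := by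
        rw [heatKernel'', abs_mul, abs_of_nonneg (heatKernel_nonneg z),
          heatKernel_eq_mul_exp_mul_exp hτ.ne']
        ring
    _ ≤ (√(4 * π * τ))⁻¹ * g * (3 / τ) := by gcongr
    _ = (√(4 * π * τ))⁻¹ * (3 / τ) * g := by ring

lemma inv_sqrt_mul_sqrt_pi_div (hτ : 0 < τ) :
    (√(4 * π * τ))⁻¹ * √(π / (8 * τ)⁻¹) = √2 := by
  rw [show π / (8 * τ)⁻¹ = 2 * (4 * π * τ) by field_simp; ring, sqrt_mul zero_le_two,
    mul_comm, mul_assoc, mul_inv_cancel₀ (by positivity), mul_one]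

end HeatKernel

lemma heatOp_eq_kernelConv {τ : ℝ} (hτ : τ ≠ 0) (f : ℝ → ℝ) :
    heatOp τ f = kernelConv (heatKernel τ) f := by
  rw [heatOp, if_neg hτ]
  rfl

section HeatOp

variable {τ M : ℝ} {f : ℝ → ℝ}

lemma hasDerivAt_heatOp (hτ : 0 < τ) (hfm : Measurable f) (hf : ∀ᵐ y, |f y| ≤ M) (x : ℝ) :
    HasDerivAt (heatOp τ f) (kernelConv (heatKernel' τ) f x) x := by
  rw [heatOp_eq_kernelConv hτ.ne']
  exact hasDerivAt_kernelConv (inv_pos.2 (by positivity)) (hasDerivAt_heatKernel hτ.ne')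
    (abs_heatKernel_le hτ) (abs_heatKernel'_le hτ) hfm hf x

lemma deriv_heatOp (hτ : 0 < τ) (hfm : Measurable f) (hf : ∀ᵐ y, |f y| ≤ M) :
    deriv (heatOp τ f) = kernelConv (heatKernel' τ) f :=
  funext fun x => (hasDerivAt_heatOp hτ hfm hf x).deriv

lemma abs_deriv_heatOp_le (hτ : 0 < τ) (hfm : Measurable f) (hf : ∀ᵐ y, |f y| ≤ M) (x : ℝ) :
    |deriv (heatOp τ f) x| ≤ 3 * M * τ ^ (-(1 / 2) : ℝ) := by
  have hM := nonneg_of_ae_abs_le hf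
  rw [deriv_heatOp hτ hfm hf, rpow_neg hτ.le, ← sqrt_eq_rpow]
  calc |kernelConv (heatKernel' τ) f x|
      ≤ (√(4 * π * τ))⁻¹ * (2 / √τ) * M * √(π / (8 * τ)⁻¹) :=
        abs_kernelConv_le (inv_pos.2 (by positivity)) (abs_heatKernel'_le hτ) hf x
    _ = 2 * √2 * M * (√τ)⁻¹ := by
        rw [← inv_sqrt_mul_sqrt_pi_div hτ]
        ring
    _ ≤ 3 * M * (√τ)⁻¹ := by
        have := sqrt_two_lt_three_halves
        gcongr
        linarith

lemma abs_deriv_heatOp_sub_le_mul_abs (hτ : 0 < τ) (hfm : Measurable f)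
    (hf : ∀ᵐ y, |f y| ≤ M) (x x' : ℝ) :
    |deriv (heatOp τ f) x - deriv (heatOp τ f) x'| ≤ 5 * M * (|x - x'| * τ ^ (-1 : ℝ)) := by
  have hM := nonneg_of_ae_abs_le hf
  have hb : (0 : ℝ) < (8 * τ)⁻¹ := inv_pos.2 (by positivity)
  have hD : ∀ z, HasDerivAt (kernelConv (heatKernel' τ) f) (kernelConv (heatKernel'' τ) f z) z :=
    hasDerivAt_kernelConv hb (hasDerivAt_heatKernel' hτ.ne') (abs_heatKernel'_le hτ)
      (abs_heatKernel''_le hτ) hfm hf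
  have hbound : ∀ z, ‖deriv (kernelConv (heatKernel' τ) f) z‖ ≤ 5 * M * τ ^ (-1 : ℝ) := by
    intro z
    rw [(hD z).deriv, norm_eq_abs, rpow_neg_one]
    calc |kernelConv (heatKernel'' τ) f z|
        ≤ (√(4 * π * τ))⁻¹ * (3 / τ) * M * √(π / (8 * τ)⁻¹) :=
          abs_kernelConv_le hb (abs_heatKernel''_le hτ) hf z
      _ = 3 * √2 * M * τ⁻¹ := by
          rw [← inv_sqrt_mul_sqrt_pi_div hτ]
          ring
      _ ≤ 5 * M * τ⁻¹ := by
          have := sqrt_two_lt_three_halves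
          gcongr
          linarith
  have h := convex_univ.norm_image_sub_le_of_norm_deriv_le
    (fun z _ => (hD z).differentiableAt) (fun z _ => hbound z) (mem_univ x') (mem_univ x)
  rw [deriv_heatOp hτ hfm hf]
  simpa only [norm_eq_abs, mul_assoc, mul_comm |x - x'|] using h

lemma abs_deriv_heatOp_sub_le (hτ : 0 < τ) (hfm : Measurable f) (hf : ∀ᵐ y, |f y| ≤ M)
    {α : ℝ} (hα0 : 0 ≤ α) (hα1 : α ≤ 1) (x x' : ℝ) :
    |deriv (heatOp τ f) x - deriv (heatOp τ f) x'|
      ≤ 6 * M * |x - x'| ^ α * τ ^ (-((1 + α) / 2)) := by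
  rw [mul_assoc (6 * M)]
  have hM := nonneg_of_ae_abs_le hf
  have hsup : |deriv (heatOp τ f) x - deriv (heatOp τ f) x'| ≤ 6 * M * τ ^ (-(1 / 2) : ℝ) := by
    have hx := abs_deriv_heatOp_le hτ hfm hf x
    have hx' := abs_deriv_heatOp_le hτ hfm hf x'
    linarith [abs_sub (deriv (heatOp τ f) x) (deriv (heatOp τ f) x')]
  have hlip : |deriv (heatOp τ f) x - deriv (heatOp τ f) x'|
      ≤ 6 * M * (|x - x'| * τ ^ (-1 : ℝ)) :=
    (abs_deriv_heatOp_sub_le_mul_abs hτ hfm hf x x').trans (by gcongr; norm_num)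
  calc |deriv (heatOp τ f) x - deriv (heatOp τ f) x'|
      ≤ 6 * M * min (τ ^ (-(1 / 2) : ℝ)) (|x - x'| * τ ^ (-1 : ℝ)) := by
        rw [mul_min_of_nonneg _ _ (by positivity)]
        exact le_min hsup hlip
    _ ≤ 6 * M * (|x - x'| ^ α * τ ^ (-((1 + α) / 2))) := by
        gcongr
        exact min_rpow_neg_half_le hτ (abs_nonneg _) hα0 hα1

end HeatOp

section Duhamel

lemma intervalIntegrable_sub_rpow {r : ℝ} (hr : -1 < r) (t : ℝ) :
    IntervalIntegrable (fun s => (t - s) ^ r) volume 0 t := by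
  simpa using
    ((intervalIntegral.intervalIntegrable_rpow' (a := 0) (b := t) hr).comp_sub_left t).symm

lemma integral_sub_rpow {r : ℝ} (hr : -1 < r) (t : ℝ) :
    ∫ s in (0 : ℝ)..t, (t - s) ^ r = t ^ (r + 1) / (r + 1) := by
  rw [intervalIntegral.integral_comp_sub_left (fun s => s ^ r), sub_self, sub_zero,
    integral_rpow (Or.inl hr), zero_rpow (by linarith), sub_zero]

variable {F : ℝ → ℝ} {c r t : ℝ}

lemma abs_intervalIntegral_le_of_le_sub_rpow (ht : 0 ≤ t) (hr : -1 < r)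
    (hF : ∀ᵐ s ∂volume.restrict (Ioo 0 t), |F s| ≤ c * (t - s) ^ r) :
    |∫ s in (0 : ℝ)..t, F s| ≤ c * (t ^ (r + 1) / (r + 1)) := by
  rw [← norm_eq_abs, ← integral_sub_rpow hr t, ← intervalIntegral.integral_const_mul]
  refine intervalIntegral.norm_integral_le_of_norm_le ht ?_
    ((intervalIntegrable_sub_rpow hr t).const_mul c)
  rwa [← ae_restrict_iff' measurableSet_Ioc, ← Measure.restrict_congr_set Ioo_ae_eq_Ioc]

lemma intervalIntegrable_of_le_sub_rpow (ht : 0 ≤ t) (hr : -1 < r)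
    (hFm : AEStronglyMeasurable F (volume.restrict (Ioo 0 t)))
    (hF : ∀ᵐ s ∂volume.restrict (Ioo 0 t), |F s| ≤ c * (t - s) ^ r) :
    IntervalIntegrable F volume 0 t := by
  have hbound := ((intervalIntegrable_sub_rpow hr t).const_mul c).1
  rw [IntegrableOn, ← Measure.restrict_congr_set Ioo_ae_eq_Ioc] at hbound
  rw [intervalIntegrable_iff_integrableOn_Ioc_of_le ht, IntegrableOn,
    ← Measure.restrict_congr_set Ioo_ae_eq_Ioc]
  exact hbound.mono' hFm hF

variable {G : ℝ → ℝ → ℝ} {M : ℝ}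

lemma ae_abs_deriv_heatOp_le (hG : Measurable fun p : ℝ × ℝ => G p.1 p.2)
    (hGM : ∀ᵐ s ∂volume.restrict (Ioo 0 t), ∀ᵐ y, |G s y| ≤ M) (x : ℝ) :
    ∀ᵐ s ∂volume.restrict (Ioo 0 t),
      |deriv (heatOp (t - s) (G s)) x| ≤ 3 * M * (t - s) ^ (-(1 / 2) : ℝ) := by
  filter_upwards [hGM, ae_restrict_mem measurableSet_Ioo] with s hs hmem
  exact abs_deriv_heatOp_le (sub_pos.2 hmem.2) hG.of_uncurry_left hs x

lemma measurable_kernelConv_heatKernel' (hG : Measurable fun p : ℝ × ℝ => G p.1 p.2)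
    (t x : ℝ) : Measurable fun s => kernelConv (heatKernel' (t - s)) (G s) x := by
  have h : Measurable fun q : ℝ × ℝ => heatKernel' (t - q.1) (x - q.2) * G q.1 q.2 := by
    refine Measurable.mul ?_ hG
    unfold heatKernel' heatKernel
    fun_prop
  exact h.stronglyMeasurable.integral_prod_right'.measurable

lemma aestronglyMeasurable_deriv_heatOp (hG : Measurable fun p : ℝ × ℝ => G p.1 p.2)
    (hGM : ∀ᵐ s ∂volume.restrict (Ioo 0 t), ∀ᵐ y, |G s y| ≤ M) (x : ℝ) :
    AEStronglyMeasurable (fun s => deriv (heatOp (t - s) (G s)) x)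
      (volume.restrict (Ioo 0 t)) := by
  refine (measurable_kernelConv_heatKernel' hG t x).aestronglyMeasurable.congr ?_
  filter_upwards [hGM, ae_restrict_mem measurableSet_Ioo] with s hs hmem
  exact congrFun (deriv_heatOp (sub_pos.2 hmem.2) hG.of_uncurry_left hs).symm x

lemma abs_integral_deriv_heatOp_le (ht : 0 ≤ t) (hG : Measurable fun p : ℝ × ℝ => G p.1 p.2)
    (hGM : ∀ᵐ s ∂volume.restrict (Ioo 0 t), ∀ᵐ y, |G s y| ≤ M) (x : ℝ) :
    |∫ s in (0 : ℝ)..t, deriv (heatOp (t - s) (G s)) x| ≤ 6 * M * √t := by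
  refine (abs_intervalIntegral_le_of_le_sub_rpow ht (by norm_num)
    (ae_abs_deriv_heatOp_le hG hGM x)).trans_eq ?_
  rw [sqrt_eq_rpow]
  norm_num
  ring

lemma abs_integral_deriv_heatOp_sub_le (ht : 0 ≤ t) (hG : Measurable fun p : ℝ × ℝ => G p.1 p.2)
    (hGM : ∀ᵐ s ∂volume.restrict (Ioo 0 t), ∀ᵐ y, |G s y| ≤ M)
    {α : ℝ} (hα0 : 0 ≤ α) (hα1 : α < 1) (x y : ℝ) :
    |(∫ s in (0 : ℝ)..t, deriv (heatOp (t - s) (G s)) x)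
        - ∫ s in (0 : ℝ)..t, deriv (heatOp (t - s) (G s)) y|
      ≤ 12 / (1 - α) * M * |x - y| ^ α * t ^ ((1 - α) / 2) := by
  have hint : ∀ z, IntervalIntegrable (fun s => deriv (heatOp (t - s) (G s)) z) volume 0 t :=
    fun z => intervalIntegrable_of_le_sub_rpow ht (by norm_num)
      (aestronglyMeasurable_deriv_heatOp hG hGM z) (ae_abs_deriv_heatOp_le hG hGM z)
  have h := abs_intervalIntegral_le_of_le_sub_rpow ht
    (by linarith : (-1 : ℝ) < -((1 + α) / 2)) <| by
      filter_upwards [hGM, ae_restrict_mem measurableSet_Ioo] with s hs hmem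
      exact abs_deriv_heatOp_sub_le (sub_pos.2 hmem.2) hG.of_uncurry_left hs
        hα0 hα1.le x y
  rw [← intervalIntegral.integral_sub (hint x) (hint y)]
  refine h.trans_eq ?_
  rw [show -((1 + α) / 2) + 1 = (1 - α) / 2 by ring]
  field_simp
  ring

end Duhamel

/-- For `α ∈ (0,1)` there is `C > 0` (depending only on `α`)
such that for every `T > 0`, every measurable `G` with `|G| ≤ Mg` a.e. on
`[0,T] × ℝ`, and every `t ∈ [0,T]`, the function
`w_t = ∫_0^t ∂_x e^{(t−s)∂_x²} G_s ds` satisfies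
`‖w_t‖_{C^{0,α}} ≤ C (√t + t^{(1−α)/2}) Mg`
(both its sup norm and its `α`-Hölder seminorm are bounded by this quantity). -/
theorem duhamel_deriv_holder_bound
    (α : ℝ) (hα : α ∈ Ioo (0:ℝ) 1) :
    ∃ C > (0:ℝ), ∀ T : ℝ, 0 < T → ∀ G : ℝ → ℝ → ℝ,
      Measurable (fun p : ℝ × ℝ => G p.1 p.2) →
      ∀ Mg : ℝ,
      (∀ᵐ (p : ℝ × ℝ) ∂volume, p.1 ∈ Icc (0:ℝ) T → |G p.1 p.2| ≤ Mg) →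
      ∀ t ∈ Icc (0:ℝ) T,
        (∀ x : ℝ, |∫ s in (0:ℝ)..t, deriv (heatOp (t - s) (G s)) x|
            ≤ C * (Real.sqrt t + t ^ ((1 - α)/2)) * Mg) ∧
        (∀ x y : ℝ,
          |(∫ s in (0:ℝ)..t, deriv (heatOp (t - s) (G s)) x)
              - ∫ s in (0:ℝ)..t, deriv (heatOp (t - s) (G s)) y|
            ≤ C * (Real.sqrt t + t ^ ((1 - α)/2)) * Mg * |x - y| ^ α) := by
  obtain ⟨hα0, hα1⟩ := hα
  have h1α : 0 < 1 - α := sub_pos.2 hα1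
  refine ⟨12 / (1 - α), by positivity, fun T _ G hG Mg hGbd t ht => ?_⟩
  rcases ht.1.eq_or_lt with rfl | ht0
  · simp [zero_rpow (by linarith : (1 - α) / 2 ≠ 0)]
  have hGM : ∀ᵐ s ∂volume.restrict (Ioo 0 t), ∀ᵐ y, |G s y| ≤ Mg := by
    rw [Measure.volume_eq_prod] at hGbd
    rw [ae_restrict_iff' measurableSet_Ioo]
    filter_upwards [Measure.ae_ae_of_ae_prod hGbd] with s hs hmem
    filter_upwards [hs] with y hy using hy ⟨hmem.1.le, hmem.2.le.trans ht.2⟩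
  have hMg : 0 ≤ Mg := by
    have : (ae (volume.restrict (Ioo 0 t))).NeBot := ae_neBot.2 (by simp [ht0])
    obtain ⟨s, hs⟩ := hGM.exists
    exact nonneg_of_ae_abs_le hs
  have hC : 6 ≤ 12 / (1 - α) := by rw [le_div_iff₀ h1α]; linarith
  have hsqrt := sqrt_nonneg t
  have hpow := rpow_nonneg ht.1 ((1 - α) / 2)
  refine ⟨fun x => (abs_integral_deriv_heatOp_le ht.1 hG hGM x).trans ?_,
    fun x y => (abs_integral_deriv_heatOp_sub_le ht.1 hG hGM hα0.le hα1 x y).trans ?_⟩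
  · nlinarith [mul_nonneg hMg hsqrt, mul_nonneg hMg hpow]
  · have hxy := rpow_nonneg (abs_nonneg (x - y)) α
    nlinarith [mul_nonneg (mul_nonneg hMg hsqrt) hxy, mul_nonneg (mul_nonneg hMg hpow) hxy]
end
end

section
/- Let χ > 1 and σ* := χ + 1/χ. Define u^{σ*}(z) := χ e^{−χ z} for z > 0 and u^{σ*}(z) := χ for z ≤ 0. Then u^{σ*} is continuous, bounded, nonnegative, integrable on [0,∞) with ∫_0^∞ u^{σ*}(z) dz = 1, and the function u_t(x) := u^{σ*}(x − σ* t) is, for every T > 0, a weak solution on [0,T] of ∂_t u = ∂_x² u − χ ∂_x( u ã(∫_x^∞ u) ) + u b̃(∫_x^∞ u). -/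
open MeasureTheory Set Filter

noncomputable section

/-- Partial derivative in the time variable. -/
def pdt (φ : ℝ → ℝ → ℝ) (t x : ℝ) : ℝ := deriv (fun s => φ s x) t

/-- Partial derivative in the space variable. -/
def pdx (φ : ℝ → ℝ → ℝ) (t x : ℝ) : ℝ := deriv (fun y => φ t y) x

/-- Second partial derivative in the space variable. -/
def pdxx (φ : ℝ → ℝ → ℝ) (t x : ℝ) : ℝ := deriv (deriv (fun y => φ t y)) x

/-- A test function of class `C_c^{1,2}`: compactly supported, jointly continuous,
`C¹` in time and `C²` in space with jointly continuous partial derivatives. -/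
def IsTestFun (φ : ℝ → ℝ → ℝ) : Prop :=
  HasCompactSupport (fun p : ℝ × ℝ => φ p.1 p.2) ∧
  Continuous (fun p : ℝ × ℝ => φ p.1 p.2) ∧
  (∀ x, Differentiable ℝ fun t => φ t x) ∧
  Continuous (fun p : ℝ × ℝ => pdt φ p.1 p.2) ∧
  (∀ t, Differentiable ℝ (φ t)) ∧
  Continuous (fun p : ℝ × ℝ => pdx φ p.1 p.2) ∧
  (∀ t, Differentiable ℝ (deriv (φ t))) ∧
  Continuous (fun p : ℝ × ℝ => pdxx φ p.1 p.2)

/-- A weak solution on `[0,T]` of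
`∂_t u = ∂_x² u − χ ∂_x(u ã(∫_x^∞ u)) + u b̃(∫_x^∞ u)`:
`t ↦ u_t` takes values in `L¹_loc(ℝ)`, each `u_t` is integrable on `[0,∞)`,
`t ↦ u_t` is continuous for the `L¹_loc` topology, and the weak formulation
holds against every `C_c^{1,2}` test function, where `F_s(x) = ∫_x^∞ u_s`. -/
def IsWeakSolU (χ T : ℝ) (u : ℝ → ℝ → ℝ) : Prop :=
  (∀ t ∈ Icc (0:ℝ) T, LocallyIntegrable (u t)) ∧
  (∀ t ∈ Icc (0:ℝ) T, IntegrableOn (u t) (Ici 0)) ∧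
  (∀ t₀ ∈ Icc (0:ℝ) T, ∀ R > (0:ℝ),
    Tendsto (fun t => ∫ x in (-R)..R, |u t x - u t₀ x|)
      (nhdsWithin t₀ (Icc 0 T)) (nhds 0)) ∧
  (∀ φ : ℝ → ℝ → ℝ, IsTestFun φ → ∀ t ∈ Icc (0:ℝ) T,
    ((∫ x : ℝ, φ t x * u t x) - ∫ x : ℝ, φ 0 x * u 0 x)
      = ∫ x : ℝ, ∫ s in (0:ℝ)..t,
          (u s x * pdt φ s x + u s x * pdxx φ s x
            + χ * ta (∫ y in Ioi x, u s y) * u s x * pdx φ s x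
            + tb (∫ y in Ioi x, u s y) * u s x * φ s x))

/-- The pushed traveling wave profile (`χ > 1`): `u^{σ*}(z) = χ e^{−χz}` for `z > 0`
and `u^{σ*}(z) = χ` for `z ≤ 0`. -/
def uprofPushed (χ : ℝ) (z : ℝ) : ℝ :=
  if 0 < z then χ * Real.exp (-(χ * z)) else χ

/-!
In the moving frame `z = x - σ t`, `σ = χ + 1/χ`, the tail mass `F(z) = ∫_z^∞ u` of the profile
exceeds `1` exactly for `z < 0`, so `ã(F)` and `b̃(F)` are indicators of the two half-lines.
Tested against `f`, the traveling-wave equation `-σ u' = u'' - χ (u ã(F))' + u b̃(F)` becomes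
`∫_{z<0} (χ f'' - f') + ∫_{z>0} χ e^{-χz} (f'' - σ f' + f) = 0`. Both integrands are exact
derivatives, of `χ f' - f` and of `χ e^{-χz} (f' + (χ - σ) f)` (the latter precisely because
`σ χ = χ² + 1`), and their boundary values at `z = 0` cancel. The weak formulation in `(t, x)`
follows by differentiating `s ↦ ∫ φ_s(x) u(x - σ s) dx` after the shift `x = y + σ s`, and
exchanging the time and space integrals by Fubini.
-/

open Function ContinuousLinearMap Topology

lemma HasCompactSupport.uncurry_apply {ψ : ℝ → ℝ → ℝ} (hs : HasCompactSupport (uncurry ψ))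
    (s : ℝ) : HasCompactSupport (ψ s) :=
  HasCompactSupport.intro (hs.isCompact.image continuous_snd) fun y hy =>
    image_eq_zero_of_notMem_tsupport (f := uncurry ψ) (x := (s, y)) fun h => hy ⟨_, h, rfl⟩

lemma Continuous.integrable_of_hasCompactSupport_uncurry {ψ : ℝ → ℝ → ℝ}
    (hψ : Continuous (uncurry ψ)) (hs : HasCompactSupport (uncurry ψ)) (s : ℝ) :
    Integrable (ψ s) :=
  (hψ.comp (continuous_const.prodMk continuous_id)).integrable_of_hasCompactSupport
    (hs.uncurry_apply s)

lemma HasCompactSupport.comp_shear {g : ℝ × ℝ → ℝ} (hg : HasCompactSupport g) (σ : ℝ) :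
    HasCompactSupport fun p : ℝ × ℝ => g (p.1, p.2 + σ * p.1) :=
  HasCompactSupport.intro (hg.isCompact.image (f := fun p => (p.1, p.2 - σ * p.1)) (by fun_prop))
    fun p hp => image_eq_zero_of_notMem_tsupport fun h => hp ⟨_, h, by simp⟩

theorem hasDerivAt_integral_of_hasCompactSupport {ψ ψ' : ℝ → ℝ → ℝ}
    (hψ : ∀ s, Integrable (ψ s)) (hψ' : Continuous (uncurry ψ'))
    (hψ's : HasCompactSupport (uncurry ψ')) (hderiv : ∀ s y, HasDerivAt (ψ · y) (ψ' s y) s)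
    (s₀ : ℝ) : HasDerivAt (fun s => ∫ y, ψ s y) (∫ y, ψ' s₀ y) s₀ := by
  obtain ⟨C, hC⟩ := hψ's.exists_bound_of_continuous hψ'
  set K := Prod.snd '' tsupport (uncurry ψ')
  have hK : IsCompact K := hψ's.isCompact.image continuous_snd
  refine (hasDerivAt_integral_of_dominated_loc_of_deriv_le (bound := K.indicator fun _ => C)
    univ_mem (Eventually.of_forall fun s => (hψ s).aestronglyMeasurable) (hψ s₀)
    (hψ'.comp (continuous_const.prodMk continuous_id)).aestronglyMeasurable
    (Eventually.of_forall fun y s _ => ?_)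
    ((integrableOn_const hK.measure_lt_top.ne).integrable_indicator hK.measurableSet)
    (Eventually.of_forall fun y s _ => hderiv s y)).2
  by_cases hy : y ∈ K
  · rw [indicator_of_mem hy]
    exact hC (s, y)
  · rw [indicator_of_notMem hy, show ψ' s y = 0 from image_eq_zero_of_notMem_tsupport
      (f := uncurry ψ') (x := (s, y)) fun h => hy ⟨_, h, rfl⟩, norm_zero]

lemma integral_Ioi_comp_sub_right (f : ℝ → ℝ) (x c : ℝ) :
    ∫ y in Ioi x, f (y - c) = ∫ y in Ioi (x - c), f y := by
  rw [← (measurePreserving_sub_right volume c).setIntegral_preimage_emb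
    (measurableEmbedding_subRight c) f, preimage_sub_const_Ioi, sub_add_cancel]

lemma integral_eq_zero_of_eqOn_deriv_Iio_Ici {D gL gR : ℝ → ℝ} {a : ℝ}
    (hgL : ContDiff ℝ 1 gL) (hgLs : HasCompactSupport gL)
    (hgR : ContDiff ℝ 1 gR) (hgRs : HasCompactSupport gR)
    (hL : EqOn (deriv gL) D (Iio a)) (hR : EqOn (deriv gR) D (Ici a)) (ha : gL a = gR a) :
    ∫ x, D x = 0 := by
  have hint (g : ℝ → ℝ) (hg : ContDiff ℝ 1 g) (hgs : HasCompactSupport g) :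
      Integrable (deriv g) :=
    (hg.continuous_deriv le_rfl).integrable_of_hasCompactSupport hgs.deriv
  rw [← intervalIntegral.integral_Iio_add_Ici
    ((hint gL hgL hgLs).integrableOn.congr_fun hL measurableSet_Iio)
    ((hint gR hgR hgRs).integrableOn.congr_fun hR measurableSet_Ici),
    ← setIntegral_congr_fun measurableSet_Iio hL, ← setIntegral_congr_fun measurableSet_Ici hR,
    setIntegral_congr_set Iio_ae_eq_Iic, setIntegral_congr_set Ioi_ae_eq_Ici.symm,
    hgLs.integral_Iic_deriv_eq hgL, hgRs.integral_Ioi_deriv_eq hgR, ha, add_neg_cancel]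

section TestFunction

variable {φ : ℝ → ℝ → ℝ}

lemma support_pdt_subset (φ : ℝ → ℝ → ℝ) :
    support (uncurry (pdt φ)) ⊆ tsupport (uncurry φ) := by
  rintro ⟨s, x⟩ h
  exact tsupport_comp_subset_preimage (uncurry φ) (f := fun τ => (τ, x)) (by fun_prop)
    (tsupport_deriv_subset (subset_tsupport _ h))

lemma support_pdx_subset (φ : ℝ → ℝ → ℝ) :
    support (uncurry (pdx φ)) ⊆ tsupport (uncurry φ) := by
  rintro ⟨s, x⟩ h
  exact tsupport_comp_subset_preimage (uncurry φ) (f := fun y => (s, y)) (by fun_prop)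
    (tsupport_deriv_subset (subset_tsupport _ h))

lemma support_pdxx_subset (φ : ℝ → ℝ → ℝ) :
    support (uncurry (pdxx φ)) ⊆ tsupport (uncurry φ) := by
  rintro ⟨s, x⟩ h
  exact tsupport_comp_subset_preimage (uncurry φ) (f := fun y => (s, y)) (by fun_prop)
    (tsupport_deriv_subset (tsupport_deriv_subset (subset_tsupport _ h)))

namespace IsTestFun

variable (hφ : IsTestFun φ)
include hφ

lemma hasCompactSupport_pdt : HasCompactSupport (uncurry (pdt φ)) :=
  hφ.1.mono' (support_pdt_subset φ)

lemma hasCompactSupport_pdx : HasCompactSupport (uncurry (pdx φ)) :=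
  hφ.1.mono' (support_pdx_subset φ)

lemma hasCompactSupport_pdxx : HasCompactSupport (uncurry (pdxx φ)) :=
  hφ.1.mono' (support_pdxx_subset φ)

lemma hasCompactSupport_apply (s : ℝ) : HasCompactSupport (φ s) :=
  HasCompactSupport.uncurry_apply hφ.1 s

lemma contDiff_two (s : ℝ) : ContDiff ℝ 2 (φ s) := by
  obtain ⟨-, -, -, -, hd, -, hd', hc''⟩ := hφ
  rw [show (2 : WithTop ℕ∞) = 1 + 1 from rfl, contDiff_succ_iff_deriv, contDiff_one_iff_deriv]
  exact ⟨hd s, by simp, hd' s, hc''.comp (continuous_const.prodMk continuous_id)⟩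

lemma hasFDerivAt_uncurry (p : ℝ × ℝ) :
    HasFDerivAt (uncurry φ) ((toSpanSingleton ℝ (pdt φ p.1 p.2)).coprod
      (toSpanSingleton ℝ (pdx φ p.1 p.2))) p := by
  obtain ⟨-, -, hdt, hct, hdx, hcx, -, -⟩ := hφ
  have hcle := (toSpanSingletonCLE (𝕜 := ℝ) (E := ℝ)).continuous
  exact (hasStrictFDerivAt_uncurry_coprod (f₁ := fun s x => toSpanSingleton ℝ (pdt φ s x))
    (f₂ := fun s x => toSpanSingleton ℝ (pdx φ s x))
    (Eventually.of_forall fun v => (hdt v.2 v.1).hasDerivAt.hasFDerivAt)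
    (Eventually.of_forall fun v => (hdx v.1 v.2).hasDerivAt.hasFDerivAt)
    (hcle.comp hct).continuousAt (hcle.comp hcx).continuousAt).hasFDerivAt

lemma hasDerivAt_comp_line (σ x s : ℝ) :
    HasDerivAt (fun τ => φ τ (x + σ * τ))
      (pdt φ s (x + σ * s) + σ * pdx φ s (x + σ * s)) s := by
  have hline : HasDerivAt (fun τ : ℝ => (τ, x + σ * τ)) (1, σ) s :=
    (hasDerivAt_id s).prodMk (by simpa using ((hasDerivAt_id s).const_mul σ).const_add x)
  refine ((hφ.hasFDerivAt_uncurry (s, x + σ * s)).comp_hasDerivAt s hline).congr_deriv ?_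
  simp [mul_comm]

lemma hasDerivAt_integral_mul_comp_sub {u : ℝ → ℝ} (hu : Continuous u) (σ s₀ : ℝ) :
    HasDerivAt (fun s => ∫ x, φ s x * u (x - σ * s))
      (∫ x, (pdt φ s₀ x + σ * pdx φ s₀ x) * u (x - σ * s₀)) s₀ := by
  have hshift (g : ℝ → ℝ) (s : ℝ) : ∫ x, g x * u (x - σ * s) = ∫ y, g (y + σ * s) * u y := by
    rw [← integral_add_right_eq_self _ (σ * s)]
    simp
  simp_rw [hshift]
  obtain ⟨hφs, hφc, -, hct, -, hcx, -, -⟩ := id hφ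
  refine hasDerivAt_integral_of_hasCompactSupport (ψ := fun s y => φ s (y + σ * s) * u y)
    (ψ' := fun s y => (pdt φ s (y + σ * s) + σ * pdx φ s (y + σ * s)) * u y) ?_ ?_ ?_
    (fun s y => (hφ.hasDerivAt_comp_line σ y s).mul_const (u y)) s₀
  · exact Continuous.integrable_of_hasCompactSupport_uncurry (by fun_prop)
      (hφs.comp_shear σ).mul_right
  · fun_prop
  · exact ((hφ.hasCompactSupport_pdt.add
      (hφ.hasCompactSupport_pdx.mul_left (f := fun _ => σ))).comp_shear σ).mul_right

end IsTestFun

end TestFunction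

section TravelingWave

variable {χ σ : ℝ} {φ : ℝ → ℝ → ℝ}

lemma uprofPushed_eq_mul_exp_max (χ z : ℝ) :
    uprofPushed χ z = χ * Real.exp (-(χ * max z 0)) := by
  unfold uprofPushed
  split_ifs with h
  · rw [max_eq_left h.le]
  · rw [max_eq_right (not_lt.1 h)]; simp

lemma continuous_uprofPushed (χ : ℝ) : Continuous (uprofPushed χ) := by
  rw [funext (uprofPushed_eq_mul_exp_max χ)]
  fun_prop

lemma uprofPushed_nonneg (hχ : 0 ≤ χ) (z : ℝ) : 0 ≤ uprofPushed χ z := by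
  rw [uprofPushed_eq_mul_exp_max]; positivity

lemma uprofPushed_le (hχ : 0 ≤ χ) (z : ℝ) : uprofPushed χ z ≤ χ := by
  rw [uprofPushed_eq_mul_exp_max]
  exact mul_le_of_le_one_right hχ (Real.exp_le_one_iff.2 (by simp only [Left.neg_nonpos_iff]; positivity))

lemma abs_uprofPushed_le (hχ : 0 ≤ χ) (z : ℝ) : |uprofPushed χ z| ≤ χ :=
  abs_le.2 ⟨by linarith [uprofPushed_nonneg hχ z], uprofPushed_le hχ z⟩

lemma uprofPushed_le_mul_exp (hχ : 0 ≤ χ) (z : ℝ) :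
    uprofPushed χ z ≤ χ * Real.exp (-(χ * z)) := by
  rw [uprofPushed_eq_mul_exp_max]
  gcongr
  exact le_max_left z 0

lemma uprofPushed_sub_of_le {a x : ℝ} (hx : a ≤ x) :
    uprofPushed χ (x - a) = χ * Real.exp (-(χ * (x - a))) := by
  rw [uprofPushed_eq_mul_exp_max, max_eq_left (sub_nonneg.2 hx)]

lemma uprofPushed_sub_of_lt {a x : ℝ} (hx : x < a) : uprofPushed χ (x - a) = χ := by
  rw [uprofPushed, if_neg (by linarith)]

lemma integrableOn_uprofPushed_comp_sub (hχ : 0 < χ) (c d : ℝ) :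
    IntegrableOn (fun x => uprofPushed χ (x - c)) (Ici d) := by
  have hexp : IntegrableOn (fun x => χ * Real.exp (χ * c) * Real.exp (-(χ * x))) (Ici d) := by
    rw [integrableOn_Ici_iff_integrableOn_Ioi]
    have := (exp_neg_integrableOn_Ioi d hχ).const_mul (χ * Real.exp (χ * c))
    simp only [neg_mul] at this
    exact this
  refine hexp.mono'
    ((continuous_uprofPushed χ).comp (continuous_sub_right c)).aestronglyMeasurable
    (Eventually.of_forall fun x => ?_)
  rw [Real.norm_of_nonneg (uprofPushed_nonneg hχ.le _), mul_assoc, ← Real.exp_add]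
  convert uprofPushed_le_mul_exp hχ.le (x - c) using 3
  ring

lemma integral_Ioi_uprofPushed_of_nonneg (hχ : 0 < χ) {z : ℝ} (hz : 0 ≤ z) :
    ∫ x in Ioi z, uprofPushed χ x = Real.exp (-(χ * z)) := by
  rw [setIntegral_congr_fun (g := fun x => χ * Real.exp (-χ * x)) measurableSet_Ioi
    fun x (hx : z < x) => by simp [uprofPushed, hz.trans_lt hx], integral_const_mul,
    integral_exp_mul_Ioi (neg_lt_zero.2 hχ)]
  field_simp

lemma integral_Ioi_uprofPushed_of_neg (hχ : 0 < χ) {z : ℝ} (hz : z < 0) :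
    ∫ x in Ioi z, uprofPushed χ x = 1 - χ * z := by
  have hIoi : IntegrableOn (uprofPushed χ) (Ioi 0) := by
    simpa using (integrableOn_uprofPushed_comp_sub hχ 0 0).mono_set Ioi_subset_Ici_self
  rw [← Ioc_union_Ioi_eq_Ioi hz.le, setIntegral_union (Ioc_disjoint_Ioi le_rfl) measurableSet_Ioi
    (continuous_uprofPushed χ).integrableOn_Ioc hIoi,
    setIntegral_congr_fun (g := fun _ => χ) measurableSet_Ioc
      fun x (hx : x ∈ Ioc z 0) => by simp [uprofPushed, hx.2],
    integral_Ioi_uprofPushed_of_nonneg hχ le_rfl, setIntegral_const,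
    Real.volume_real_Ioc_of_le hz.le, smul_eq_mul, mul_zero, neg_zero, Real.exp_zero]
  ring

lemma ta_integral_Ioi_uprofPushed (hχ : 0 < χ) (c x : ℝ) :
    ta (∫ y in Ioi x, uprofPushed χ (y - c)) = if x < c then 1 else 0 := by
  rw [integral_Ioi_comp_sub_right, ta]
  by_cases h : x < c
  · rw [integral_Ioi_uprofPushed_of_neg hχ (by linarith), if_pos h, if_pos (by nlinarith)]
  · rw [integral_Ioi_uprofPushed_of_nonneg hχ (by linarith), if_neg h, if_neg]
    exact not_lt.2 (Real.exp_le_one_iff.2 (neg_nonpos.2 (by nlinarith)))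

theorem integral_uprofPushed_mul_travelingWave_eq_zero
    (hσ : σ * χ = χ ^ 2 + 1) {f : ℝ → ℝ} (hf : ContDiff ℝ 2 f) (hfs : HasCompactSupport f)
    (a : ℝ) :
    ∫ x, uprofPushed χ (x - a) *
      (deriv (deriv f) x + (if x < a then χ * deriv f x else f x) - σ * deriv f x) = 0 := by
  have hf1 : ContDiff ℝ 1 (deriv f) := hf.deriv'
  have hf1' : ContDiff ℝ 1 f := hf.of_le one_le_two
  have hd (x : ℝ) : HasDerivAt f (deriv f x) x :=
    (hf.differentiable two_ne_zero x).hasDerivAt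
  have hd' (x : ℝ) : HasDerivAt (deriv f) (deriv (deriv f) x) x :=
    (hf1.differentiable one_ne_zero x).hasDerivAt
  set gL : ℝ → ℝ := fun x => χ * deriv f x - f x with hgL_def
  set gR : ℝ → ℝ := fun x => χ * Real.exp (-(χ * (x - a))) * (deriv f x + (χ - σ) * f x)
    with hgR_def
  have hgL : ContDiff ℝ 1 gL := by rw [hgL_def]; fun_prop
  have hgR : ContDiff ℝ 1 gR := by rw [hgR_def]; fun_prop
  have hgLs : HasCompactSupport gL := (hfs.deriv.mul_left (f := fun _ => χ)).sub hfs
  have hgRs : HasCompactSupport gR :=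
    (hfs.deriv.add (hfs.mul_left (f := fun _ => χ - σ))).mul_left
  have hleft : EqOn (deriv gL) (fun x => uprofPushed χ (x - a) *
      (deriv (deriv f) x + (if x < a then χ * deriv f x else f x) - σ * deriv f x)) (Iio a) := by
    intro x (hx : x < a)
    have hgLd : HasDerivAt gL (χ * deriv (deriv f) x - deriv f x) x :=
      (hd' x).const_mul χ |>.sub (hd x)
    rw [hgLd.deriv]
    dsimp only
    rw [uprofPushed_sub_of_lt hx, if_pos hx]
    linear_combination deriv f x * hσ
  have hright : EqOn (deriv gR) (fun x => uprofPushed χ (x - a) *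
      (deriv (deriv f) x + (if x < a then χ * deriv f x else f x) - σ * deriv f x)) (Ici a) := by
    intro x (hx : a ≤ x)
    have hE : HasDerivAt (fun y => Real.exp (-(χ * (y - a))))
        (-χ * Real.exp (-(χ * (x - a)))) x := by
      simpa [mul_comm] using (((hasDerivAt_id x).sub_const a).const_mul χ).neg.exp
    have hgRd : HasDerivAt gR _ x :=
      (hE.const_mul χ).mul ((hd' x).add ((hd x).const_mul (χ - σ)))
    rw [hgRd.deriv]
    dsimp only
    rw [uprofPushed_sub_of_le hx, if_neg (not_lt.2 hx)]
    linear_combination χ * Real.exp (-(χ * (x - a))) * f x * hσ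
  refine integral_eq_zero_of_eqOn_deriv_Iio_Ici hgL hgLs hgR hgRs hleft hright ?_
  simp only [gL, gR, sub_self, mul_zero, neg_zero, Real.exp_zero, mul_one]
  linear_combination f a * hσ

def weakIntegrand (χ : ℝ) (u φ : ℝ → ℝ → ℝ) (s x : ℝ) : ℝ :=
  u s x * pdt φ s x + u s x * pdxx φ s x
    + χ * ta (∫ y in Ioi x, u s y) * u s x * pdx φ s x
    + tb (∫ y in Ioi x, u s y) * u s x * φ s x

lemma weakIntegrand_travelingWave (hχ : 0 < χ) (σ : ℝ) (φ : ℝ → ℝ → ℝ) (s x : ℝ) :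
    weakIntegrand χ (fun s x => uprofPushed χ (x - σ * s)) φ s x =
      uprofPushed χ (x - σ * s) *
        (pdt φ s x + pdxx φ s x + if x < σ * s then χ * pdx φ s x else φ s x) := by
  simp only [weakIntegrand, tb, ta_integral_Ioi_uprofPushed hχ]
  split_ifs <;> ring

lemma abs_weakIntegrand_travelingWave_le (hχ : 0 < χ) (σ : ℝ) (φ : ℝ → ℝ → ℝ) (s x : ℝ) :
    |weakIntegrand χ (fun s x => uprofPushed χ (x - σ * s)) φ s x| ≤
      χ * (|pdt φ s x| + |pdxx φ s x| + (χ * |pdx φ s x| + |φ s x|)) := by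
  rw [weakIntegrand_travelingWave hχ, abs_mul]
  refine mul_le_mul (abs_uprofPushed_le hχ.le _) ?_ (abs_nonneg _) hχ.le
  refine (abs_add_le _ _).trans (add_le_add (abs_add_le _ _) ?_)
  split_ifs
  · rw [abs_mul, abs_of_pos hχ]; linarith [abs_nonneg (φ s x)]
  · linarith [mul_nonneg hχ.le (abs_nonneg (pdx φ s x))]

lemma measurable_weakIntegrand_travelingWave (hχ : 0 < χ) (hφ : IsTestFun φ) (σ : ℝ) :
    Measurable (uncurry (weakIntegrand χ (fun s x => uprofPushed χ (x - σ * s)) φ)) := by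
  obtain ⟨-, hφc, -, hct, -, hcx, -, hcxx⟩ := hφ
  have hu := continuous_uprofPushed χ
  rw [show uncurry (weakIntegrand χ (fun s x => uprofPushed χ (x - σ * s)) φ) = _ from
    funext fun p => weakIntegrand_travelingWave hχ σ φ p.1 p.2]
  refine (by fun_prop : Continuous fun p : ℝ × ℝ => uprofPushed χ (p.2 - σ * p.1)).measurable.mul
    ?_
  exact (hct.add hcxx).measurable.add (Measurable.ite
    (measurableSet_lt measurable_snd (by fun_prop)) (by fun_prop) hφc.measurable)

lemma IsTestFun.continuous_weakBound (hφ : IsTestFun φ) (χ : ℝ) :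
    Continuous (uncurry fun s x =>
      χ * (|pdt φ s x| + |pdxx φ s x| + (χ * |pdx φ s x| + |φ s x|))) := by
  obtain ⟨-, hφc, -, hct, -, hcx, -, hcxx⟩ := hφ
  exact continuous_const.mul (((hct.abs.add hcxx.abs).add
    ((continuous_const.mul hcx.abs).add hφc.abs)))

lemma IsTestFun.hasCompactSupport_weakBound (hφ : IsTestFun φ) (χ : ℝ) :
    HasCompactSupport (uncurry fun s x =>
      χ * (|pdt φ s x| + |pdxx φ s x| + (χ * |pdx φ s x| + |φ s x|))) :=
  ((hφ.hasCompactSupport_pdt.abs.add hφ.hasCompactSupport_pdxx.abs).add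
    (hφ.hasCompactSupport_pdx.abs.mul_left.add hφ.1.abs)).mul_left

lemma integrable_uncurry_weakIntegrand_travelingWave (hχ : 0 < χ) (hφ : IsTestFun φ) (σ : ℝ)
    (μ : Measure (ℝ × ℝ)) [IsFiniteMeasureOnCompacts μ] :
    Integrable (uncurry (weakIntegrand χ (fun s x => uprofPushed χ (x - σ * s)) φ)) μ :=
  ((hφ.continuous_weakBound χ).integrable_of_hasCompactSupport
    (hφ.hasCompactSupport_weakBound χ)).mono'
    (measurable_weakIntegrand_travelingWave hχ hφ σ).aestronglyMeasurable
    (Eventually.of_forall fun p => abs_weakIntegrand_travelingWave_le hχ σ φ p.1 p.2)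

lemma integrable_weakIntegrand_travelingWave (hχ : 0 < χ) (hφ : IsTestFun φ) (σ s : ℝ) :
    Integrable (weakIntegrand χ (fun s x => uprofPushed χ (x - σ * s)) φ s) :=
  ((hφ.continuous_weakBound χ).integrable_of_hasCompactSupport_uncurry
    (hφ.hasCompactSupport_weakBound χ) s).mono'
    ((measurable_weakIntegrand_travelingWave hχ hφ σ).comp
      measurable_prodMk_left).aestronglyMeasurable
    (Eventually.of_forall fun x => abs_weakIntegrand_travelingWave_le hχ σ φ s x)

lemma integral_weakIntegrand_travelingWave (hχ : 0 < χ) (hσ : σ * χ = χ ^ 2 + 1)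
    (hφ : IsTestFun φ) (s : ℝ) :
    ∫ x, weakIntegrand χ (fun s x => uprofPushed χ (x - σ * s)) φ s x =
      ∫ x, (pdt φ s x + σ * pdx φ s x) * uprofPushed χ (x - σ * s) := by
  obtain ⟨-, -, -, hct, -, hcx, -, -⟩ := id hφ
  have hdrift : Integrable fun x => (pdt φ s x + σ * pdx φ s x) * uprofPushed χ (x - σ * s) :=
    Continuous.integrable_of_hasCompactSupport_uncurry
      (ψ := fun s x => (pdt φ s x + σ * pdx φ s x) * uprofPushed χ (x - σ * s))
      (by have := continuous_uprofPushed χ; fun_prop)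
      (hφ.hasCompactSupport_pdt.add hφ.hasCompactSupport_pdx.mul_left).mul_right s
  rw [← sub_eq_zero, ← integral_sub (integrable_weakIntegrand_travelingWave hχ hφ σ s) hdrift,
    ← integral_uprofPushed_mul_travelingWave_eq_zero hσ (hφ.contDiff_two s)
      (hφ.hasCompactSupport_apply s) (σ * s)]
  congr 1 with x
  rw [weakIntegrand_travelingWave hχ]
  simp only [pdt, pdx, pdxx]
  ring

theorem integral_sub_integral_eq_integral_weakIntegrand_travelingWave (hχ : 0 < χ)
    (hσ : σ * χ = χ ^ 2 + 1) (hφ : IsTestFun φ) {t : ℝ} (ht : 0 ≤ t) :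
    (∫ x, φ t x * uprofPushed χ (x - σ * t)) - ∫ x, φ 0 x * uprofPushed χ (x - σ * 0) =
      ∫ x, ∫ s in (0 : ℝ)..t, weakIntegrand χ (fun s x => uprofPushed χ (x - σ * s)) φ s x := by
  have hint := integrable_uncurry_weakIntegrand_travelingWave hχ hφ σ
    ((volume.restrict (Ioc 0 t)).prod volume)
  rw [← intervalIntegral.integral_eq_sub_of_hasDerivAt
    (f := fun s => ∫ x, φ s x * uprofPushed χ (x - σ * s))
    (f' := fun s => ∫ x, weakIntegrand χ (fun s x => uprofPushed χ (x - σ * s)) φ s x)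
    (fun s _ => by
      rw [integral_weakIntegrand_travelingWave hχ hσ hφ s]
      exact hφ.hasDerivAt_integral_mul_comp_sub (continuous_uprofPushed χ) σ s)
    ((intervalIntegrable_iff_integrableOn_Ioc_of_le ht).2 hint.integral_prod_left)]
  simp only [intervalIntegral.integral_of_le ht]
  exact integral_integral_swap hint

lemma tendsto_integral_abs_sub_comp_sub {u : ℝ → ℝ} (hu : Continuous u) (σ t₀ a b : ℝ) :
    Tendsto (fun t => ∫ x in a..b, |u (x - σ * t) - u (x - σ * t₀)|) (𝓝 t₀) (𝓝 0) := by
  have hcont : Continuous fun t => ∫ x in a..b, |u (x - σ * t) - u (x - σ * t₀)| :=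
    intervalIntegral.continuous_parametric_intervalIntegral_of_continuous' (by fun_prop) a b
  simpa using hcont.tendsto t₀

theorem isWeakSolU_travelingWave (hχ : 0 < χ) (T : ℝ) :
    IsWeakSolU χ T fun t x => uprofPushed χ (x - (χ + 1 / χ) * t) := by
  have hσ : (χ + 1 / χ) * χ = χ ^ 2 + 1 := by field_simp
  refine ⟨fun t _ => ((continuous_uprofPushed χ).comp (continuous_sub_right _)).locallyIntegrable,
    fun t _ => integrableOn_uprofPushed_comp_sub hχ _ 0,
    fun t₀ _ R _ => (tendsto_integral_abs_sub_comp_sub (continuous_uprofPushed χ) _ t₀ _ _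
      ).mono_left nhdsWithin_le_nhds,
    fun φ hφ t ht => integral_sub_integral_eq_integral_weakIntegrand_travelingWave hχ hσ hφ ht.1⟩

end TravelingWave

/-- For `χ > 1` and `σ* = χ + 1/χ`, the profile `u^{σ*}` is
continuous, bounded, nonnegative, integrable on `[0,∞)` with `∫_0^∞ u^{σ*} = 1`,
and `u_t(x) = u^{σ*}(x − σ* t)` is a weak solution of the nonlinear equation
on `[0,T]` for every `T > 0`. -/
theorem pushed_traveling_wave
    (χ : ℝ) (hχ : 1 < χ) :
    Continuous (uprofPushed χ) ∧
    (∃ C : ℝ, ∀ z, |uprofPushed χ z| ≤ C) ∧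
    (∀ z, 0 ≤ uprofPushed χ z) ∧
    IntegrableOn (uprofPushed χ) (Ici 0) ∧
    ((∫ z in Ioi (0:ℝ), uprofPushed χ z) = 1) ∧
    (∀ T > (0:ℝ), IsWeakSolU χ T fun t x => uprofPushed χ (x - (χ + 1/χ) * t)) := by
  have hχ0 : 0 < χ := zero_lt_one.trans hχ
  exact ⟨continuous_uprofPushed χ, ⟨χ, abs_uprofPushed_le hχ0.le⟩, uprofPushed_nonneg hχ0.le,
    by simpa using integrableOn_uprofPushed_comp_sub hχ0 0 0,
    by simpa using integral_Ioi_uprofPushed_of_nonneg hχ0 le_rfl,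
    fun T _ => isWeakSolU_travelingWave hχ0 T⟩
end
end

section
/- Let χ > 1 and σ* := χ + 1/χ, let u^{σ*}(z) := χ e^{−χ z} for z > 0 and χ for z ≤ 0, and define β(z) := σ* − χ·𝟙{z<0} + 2 (u^{σ*})'(z)/u^{σ*}(z) for z ≠ 0; explicitly β(z) = 1/χ for z < 0 and β(z) = 1/χ − χ for z > 0. Define v_∞(z) := ((χ²−1)/χ³) e^{z/χ} for z ≤ 0 and v_∞(z) := ((χ²−1)/χ³) e^{−(χ−1/χ) z} for z > 0. Then v_∞ is a probability density: ∫_ℝ v_∞(z) dz = 1; and v_∞ is a distributional stationary solution of the Fokker–Planck equation ∂_s v − ∂_z² v + ∂_z(β v) = 0, i.e. for every φ ∈ C_c²(ℝ): ∫_ℝ v_∞(z) φ''(z) dz + ∫_ℝ β(z) v_∞(z) φ'(z) dz = 0. -/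
open MeasureTheory Set Filter

noncomputable section

/-- The ancestral-lineage drift in the pushed regime `χ > 1`:
`β(z) = 1/χ` for `z < 0` and `β(z) = 1/χ − χ` for `z > 0`. -/
def betaPushed (χ : ℝ) (z : ℝ) : ℝ :=
  if z < 0 then 1/χ else 1/χ - χ

/-- The equilibrium ancestral-lineage density in the pushed regime:
`v_∞(z) = ((χ²−1)/χ³) e^{z/χ}` for `z ≤ 0` and `((χ²−1)/χ³) e^{−(χ−1/χ)z}` for `z > 0`. -/
def vinfPushed (χ : ℝ) (z : ℝ) : ℝ :=
  if z ≤ 0 then ((χ^2 - 1)/χ^3) * Real.exp (z/χ)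
  else ((χ^2 - 1)/χ^3) * Real.exp (-(χ - 1/χ) * z)

/-! On each half-line `v_∞` is an exponential whose rate is the drift, so the
probability flux `v_∞' - β v_∞` vanishes there. Hence `v_∞ φ'' + β v_∞ φ'` is the derivative
of `v_∞ φ'` away from `0`, and since `v_∞ φ'` is continuous with compact support, its
integral is zero. The normalisation is the sum `(χ² - 1)/χ² + 1/χ²` of two exponential
integrals. -/

theorem integral_eq_zero_of_hasDerivAt_of_ne {E : Type*} [NormedAddCommGroup E]
    [NormedSpace ℝ E] [CompleteSpace E] {F f : ℝ → E} (a : ℝ) (hF : Continuous F)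
    (hFs : HasCompactSupport F) (hderiv : ∀ x ≠ a, HasDerivAt F (f x) x) (hf : Integrable f) :
    ∫ x, f x = 0 := by
  have h_left : ∫ x in Iic a, f x = F a - 0 :=
    integral_Iic_of_hasDerivAt_of_tendsto hF.continuousWithinAt
      (fun x hx => hderiv x hx.out.ne) hf.integrableOn
      (hFs.is_zero_at_infty.mono_left atBot_le_cocompact)
  have h_right : ∫ x in Ioi a, f x = 0 - F a :=
    integral_Ioi_of_hasDerivAt_of_tendsto hF.continuousWithinAt
      (fun x hx => hderiv x hx.out.ne') hf.integrableOn
      (hFs.is_zero_at_infty.mono_left atTop_le_cocompact)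
  rw [← intervalIntegral.integral_Iic_add_Ioi hf.integrableOn hf.integrableOn, h_left,
    h_right, sub_zero, zero_sub, add_neg_cancel]

theorem hasDerivAt_const_mul_exp_mul (c k x : ℝ) :
    HasDerivAt (fun z => c * Real.exp (k * z)) (k * (c * Real.exp (k * x))) x :=
  (((hasDerivAt_id' x).const_mul k).exp.const_mul c).congr_deriv (by ring)

section Pushed

variable {χ z : ℝ}

theorem hasDerivAt_uprofPushed_of_neg (hz : z < 0) : HasDerivAt (uprofPushed χ) 0 z := by
  refine (hasDerivAt_const z χ).congr_of_eventuallyEq ?_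
  filter_upwards [Iio_mem_nhds hz] with w hw
  simp [uprofPushed, not_lt.2 hw.out.le]

theorem hasDerivAt_uprofPushed_of_pos (hz : 0 < z) :
    HasDerivAt (uprofPushed χ) (-χ * uprofPushed χ z) z := by
  have hexp := hasDerivAt_const_mul_exp_mul χ (-χ) z
  simp only [neg_mul] at hexp
  refine (hexp.congr_of_eventuallyEq ?_).congr_deriv ?_
  · filter_upwards [Ioi_mem_nhds hz] with w hw
    simp [uprofPushed, hw.out]
  · simp [uprofPushed, hz]

theorem betaPushed_eq_drift (hχ : χ ≠ 0) (hz : z ≠ 0) :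
    betaPushed χ z = (χ + 1/χ) - χ * (if z < 0 then 1 else 0)
      + 2 * deriv (uprofPushed χ) z / uprofPushed χ z := by
  rcases hz.lt_or_gt with hz | hz
  · simp [betaPushed, hz, (hasDerivAt_uprofPushed_of_neg hz).deriv]
  · have hu : uprofPushed χ z ≠ 0 := by simp [uprofPushed, hz, hχ, Real.exp_ne_zero]
    rw [(hasDerivAt_uprofPushed_of_pos hz).deriv]
    simp only [betaPushed, not_lt.2 hz.le, if_false]
    field_simp
    ring

theorem vinfPushed_of_nonpos (hz : z ≤ 0) :
    vinfPushed χ z = (χ^2 - 1)/χ^3 * Real.exp (χ⁻¹ * z) := by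
  simp [vinfPushed, hz, div_eq_inv_mul]

theorem vinfPushed_of_pos (hz : 0 < z) :
    vinfPushed χ z = (χ^2 - 1)/χ^3 * Real.exp ((χ⁻¹ - χ) * z) := by
  simp [vinfPushed, not_le.2 hz]

theorem continuous_vinfPushed : Continuous (vinfPushed χ) :=
  Continuous.if_le (by fun_prop) (by fun_prop) continuous_id continuous_const
    (fun x hx => by simp [hx])

theorem hasDerivAt_vinfPushed (hz : z ≠ 0) :
    HasDerivAt (vinfPushed χ) (betaPushed χ z * vinfPushed χ z) z := by
  rcases hz.lt_or_gt with hz | hz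
  · refine ((hasDerivAt_const_mul_exp_mul ((χ^2 - 1)/χ^3) χ⁻¹ z).congr_of_eventuallyEq
      ?_).congr_deriv ?_
    · filter_upwards [Iic_mem_nhds hz] with w hw using vinfPushed_of_nonpos hw
    · rw [vinfPushed_of_nonpos hz.le, betaPushed, if_pos hz, one_div]
  · refine ((hasDerivAt_const_mul_exp_mul ((χ^2 - 1)/χ^3) (χ⁻¹ - χ) z).congr_of_eventuallyEq
      ?_).congr_deriv ?_
    · filter_upwards [Ioi_mem_nhds hz] with w hw using vinfPushed_of_pos hw
    · rw [vinfPushed_of_pos hz, betaPushed, if_neg (not_lt.2 hz.le), one_div]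

theorem integrable_betaPushed_mul {g : ℝ → ℝ} (hg : Integrable g) :
    Integrable (fun z => betaPushed χ z * g z) := by
  refine hg.bdd_mul (c := max |1/χ| |1/χ - χ|) ?_ (ae_of_all _ fun z => ?_)
  · exact (Measurable.ite measurableSet_Iio measurable_const measurable_const).aestronglyMeasurable
  · unfold betaPushed
    split_ifs
    exacts [le_max_left _ _, le_max_right _ _]

theorem vinfPushed_weak_stationary {φ : ℝ → ℝ} (hφ : ContDiff ℝ 2 φ)
    (hφs : HasCompactSupport φ) :
    (∫ z, vinfPushed χ z * deriv (deriv φ) z)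
      + (∫ z, betaPushed χ z * vinfPushed χ z * deriv φ z) = 0 := by
  have hφ' : ContDiff ℝ 1 (deriv φ) := hφ.iterate_deriv' 1 1
  have hφ's : HasCompactSupport (deriv φ) := hφs.deriv
  have hint' : Integrable (fun z => vinfPushed χ z * deriv φ z) :=
    (continuous_vinfPushed.mul hφ'.continuous).integrable_of_hasCompactSupport hφ's.mul_left
  have hint'' : Integrable (fun z => vinfPushed χ z * deriv (deriv φ) z) :=
    (continuous_vinfPushed.mul (hφ'.continuous_deriv le_rfl)).integrable_of_hasCompactSupport
      hφ's.deriv.mul_left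
  have hint_drift : Integrable (fun z => betaPushed χ z * vinfPushed χ z * deriv φ z) := by
    simpa only [mul_assoc] using integrable_betaPushed_mul hint'
  rw [← integral_add hint'' hint_drift]
  refine integral_eq_zero_of_hasDerivAt_of_ne (F := fun z => vinfPushed χ z * deriv φ z) 0
    (continuous_vinfPushed.mul hφ'.continuous)
    hφ's.mul_left (fun z hz => ?_) (hint''.add hint_drift)
  exact ((hasDerivAt_vinfPushed (χ := χ) hz).mul
    (hφ'.differentiable one_ne_zero z).hasDerivAt).congr_deriv (add_comm _ _)

theorem inv_sub_self_neg (hχ : 1 < χ) : χ⁻¹ - χ < 0 :=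
  sub_neg.2 ((inv_lt_one_of_one_lt₀ hχ).trans hχ)

theorem integrableOn_vinfPushed_Iic (hχ : 0 < χ) : IntegrableOn (vinfPushed χ) (Iic 0) :=
  IntegrableOn.congr_fun ((integrableOn_exp_mul_Iic (inv_pos.2 hχ) 0).const_mul _)
    (fun _ hz => (vinfPushed_of_nonpos hz).symm) measurableSet_Iic

theorem integrableOn_vinfPushed_Ioi (hχ : 1 < χ) : IntegrableOn (vinfPushed χ) (Ioi 0) :=
  IntegrableOn.congr_fun ((integrableOn_exp_mul_Ioi (inv_sub_self_neg hχ) 0).const_mul _)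
    (fun _ hz => (vinfPushed_of_pos hz).symm) measurableSet_Ioi

theorem integral_vinfPushed_Iic (hχ : 0 < χ) :
    ∫ z in Iic 0, vinfPushed χ z = (χ^2 - 1)/χ^2 := by
  rw [setIntegral_congr_fun measurableSet_Iic fun _ hz => vinfPushed_of_nonpos hz,
    integral_const_mul, integral_exp_mul_Iic (inv_pos.2 hχ), mul_zero, Real.exp_zero]
  field_simp

theorem integral_vinfPushed_Ioi (hχ : 1 < χ) :
    ∫ z in Ioi 0, vinfPushed χ z = 1/χ^2 := by
  rw [setIntegral_congr_fun measurableSet_Ioi fun _ hz => vinfPushed_of_pos hz,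
    integral_const_mul, integral_exp_mul_Ioi (inv_sub_self_neg hχ), mul_zero, Real.exp_zero]
  have hχ2 : 1 - χ^2 ≠ 0 := (by nlinarith : 1 - χ^2 < 0).ne
  field_simp
  ring

theorem integral_vinfPushed (hχ : 1 < χ) : ∫ z, vinfPushed χ z = 1 := by
  have hχ0 : 0 < χ := zero_lt_one.trans hχ
  rw [← intervalIntegral.integral_Iic_add_Ioi (integrableOn_vinfPushed_Iic hχ0)
    (integrableOn_vinfPushed_Ioi hχ), integral_vinfPushed_Iic hχ0, integral_vinfPushed_Ioi hχ]
  field_simp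
  ring

end Pushed

/-- In the pushed regime `χ > 1` with `σ* = χ + 1/χ`:
the drift `β` agrees with `σ* − χ𝟙{z<0} + 2(u^{σ*})'/u^{σ*}` away from `0`,
`v_∞` is a probability density, and `v_∞` is a distributional stationary solution
of the Fokker–Planck equation `∂_s v − ∂_z² v + ∂_z(β v) = 0`. -/
theorem pushed_ancestral_equilibrium
    (χ : ℝ) (hχ : 1 < χ) :
    (∀ z : ℝ, z ≠ 0 →
      betaPushed χ z = (χ + 1/χ) - χ * (if z < 0 then 1 else 0)
        + 2 * deriv (uprofPushed χ) z / uprofPushed χ z) ∧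
    ((∫ z : ℝ, vinfPushed χ z) = 1) ∧
    (∀ φ : ℝ → ℝ, ContDiff ℝ 2 φ → HasCompactSupport φ →
      (∫ z : ℝ, vinfPushed χ z * deriv (deriv φ) z)
        + (∫ z : ℝ, betaPushed χ z * vinfPushed χ z * deriv φ z) = 0) :=
  ⟨fun _ hz => betaPushed_eq_drift (by positivity) hz, integral_vinfPushed hχ,
    fun _ hφ hφs => vinfPushed_weak_stationary hφ hφs⟩
end
end
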